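/- arXiv:1302.4270 — 6 statements merged into one kernel-verified Lean document; each statement's English description precedes it below -/
import Mathlib

section
/- In any compact Hausdorff right topological semigroup T, the smallest two-sided ideal K(T) exists and equals both the union of all minimal left ideals of T and the union of all minimal right ideals of T. -/
variable {T : Type*}

/-- `L` is a left ideal of the semigroup `T`. -/
def IsLeftIdeal [Semigroup T] (L : Set T) : Prop :=
  L.Nonempty ∧ ∀ p ∈ L, ∀ q : T, q * p ∈ L

/-- `R` is a right ideal of the semigroup `T`. -/
def IsRightIdeal [Semigroup T] (R : Set T) : Prop :=
  R.Nonempty ∧ ∀ p ∈ R, ∀ q : T, p * q ∈ R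

/-- `I` is a two-sided ideal of the semigroup `T`. -/
def IsTwoSidedIdeal [Semigroup T] (I : Set T) : Prop :=
  IsLeftIdeal I ∧ IsRightIdeal I

/-- `L` is a minimal left ideal. -/
def IsMinimalLeftIdeal [Semigroup T] (L : Set T) : Prop :=
  IsLeftIdeal L ∧ ∀ L' : Set T, IsLeftIdeal L' → L' ⊆ L → L' = L

/-- `R` is a minimal right ideal. -/
def IsMinimalRightIdeal [Semigroup T] (R : Set T) : Prop :=
  IsRightIdeal R ∧ ∀ R' : Set T, IsRightIdeal R' → R' ⊆ R → R' = R

set_option linter.unusedSectionVars false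

section Aux

variable [Semigroup T] [TopologicalSpace T] [CompactSpace T] [T2Space T]

/-- Ellis' theorem: a nonempty closed subsemigroup of a compact Hausdorff right
topological semigroup contains an idempotent. -/
lemma aux_exists_idem (hright : ∀ p : T, Continuous fun q : T => q * p)
    {A : Set T} (hne : A.Nonempty) (hcl : IsClosed A)
    (hmul : ∀ p ∈ A, ∀ q ∈ A, p * q ∈ A) : ∃ e ∈ A, e * e = e := by
  set S : Set (Set T) :=
    {B | B ⊆ A ∧ B.Nonempty ∧ IsClosed B ∧ ∀ p ∈ B, ∀ q ∈ B, p * q ∈ B} with hS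
  have hzorn : ∀ c ⊆ S, IsChain (· ⊆ ·) c → c.Nonempty →
      ∃ lb ∈ S, ∀ s ∈ c, lb ⊆ s := by
    rintro c hcS hchain ⟨B₀, hB₀⟩
    refine ⟨⋂₀ c, ⟨?_, ?_, ?_, ?_⟩, fun s hs => Set.sInter_subset_of_mem hs⟩
    · exact (Set.sInter_subset_of_mem hB₀).trans (hcS hB₀).1
    · have : Nonempty c := ⟨⟨B₀, hB₀⟩⟩
      exact IsCompact.nonempty_sInter_of_directed_nonempty_isCompact_isClosed
        (IsChain.directedOn hchain.symm) (fun U hU => (hcS hU).2.1)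
        (fun U hU => (hcS hU).2.2.1.isCompact) (fun U hU => (hcS hU).2.2.1)
    · exact isClosed_sInter (fun U hU => (hcS hU).2.2.1)
    · intro x hx y hy
      exact fun U hU => (hcS hU).2.2.2 x (hx U hU) y (hy U hU)
  obtain ⟨M, -, hM⟩ := zorn_superset_nonempty S hzorn A ⟨subset_rfl, hne, hcl, hmul⟩
  · obtain ⟨hMA, ⟨p, hp⟩, hMcl, hMmul⟩ := hM.prop
    -- M * p = M by minimality
    have hMpS : (fun q => q * p) '' M ∈ S := by
      refine ⟨?_, ⟨p * p, ⟨p, hp, rfl⟩⟩, ?_, ?_⟩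
      · rintro _ ⟨q, hq, rfl⟩; exact hMA (hMmul q hq p hp)
      · exact ((hMcl.isCompact.image (hright p)).isClosed)
      · rintro _ ⟨q, hq, rfl⟩ _ ⟨r, hr, rfl⟩
        exact ⟨q * p * r, hMmul _ (hMmul q hq p hp) r hr, by dsimp; rw [mul_assoc]⟩
    have hMp : (fun q => q * p) '' M = M := by
      refine hM.eq_of_subset hMpS ?_
      rintro _ ⟨q, hq, rfl⟩; exact hMmul q hq p hp
    -- B = {q ∈ M | q * p = p} is a member of S
    have hBne : ({q ∈ M | q * p = p} : Set T).Nonempty := by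
      have : p ∈ (fun q => q * p) '' M := hMp.symm ▸ hp
      obtain ⟨q, hq, hqp⟩ := this
      exact ⟨q, hq, hqp⟩
    have hBS : ({q ∈ M | q * p = p} : Set T) ∈ S := by
      refine ⟨fun x hx => hMA hx.1, hBne, ?_, ?_⟩
      · exact hMcl.inter (isClosed_eq (hright p) continuous_const)
      · rintro x ⟨hxM, hxp⟩ y ⟨hyM, hyp⟩
        exact ⟨hMmul x hxM y hyM, by rw [mul_assoc, hyp, hxp]⟩
    have hB : ({q ∈ M | q * p = p} : Set T) = M :=
      hM.eq_of_subset hBS (fun x hx => hx.1)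
    have hpB : p ∈ ({q ∈ M | q * p = p} : Set T) := hB.symm ▸ hp
    exact ⟨p, hMA hp, hpB.2⟩

/-- `T * p` is a closed left ideal. -/
lemma aux_Tp_leftIdeal (p : T) : IsLeftIdeal (Set.range fun q : T => q * p) := by
  refine ⟨⟨p * p, p, rfl⟩, ?_⟩
  rintro _ ⟨r, rfl⟩ q
  exact ⟨q * r, by dsimp; rw [mul_assoc]⟩

/-- Every left ideal contains a minimal left ideal. -/
lemma aux_exists_minimal (hright : ∀ p : T, Continuous fun q : T => q * p)
    {L : Set T} (hL : IsLeftIdeal L) : ∃ M ⊆ L, IsMinimalLeftIdeal M := by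
  obtain ⟨p, hp⟩ := hL.1
  have hTp : (Set.range fun q : T => q * p) ⊆ L := by
    rintro _ ⟨q, rfl⟩; exact hL.2 p hp q
  set S : Set (Set T) := {B | B ⊆ L ∧ IsLeftIdeal B ∧ IsClosed B} with hS
  have hTpS : (Set.range fun q : T => q * p) ∈ S :=
    ⟨hTp, aux_Tp_leftIdeal p, (isCompact_range (hright p)).isClosed⟩
  have hzorn : ∀ c ⊆ S, IsChain (· ⊆ ·) c → c.Nonempty →
      ∃ lb ∈ S, ∀ s ∈ c, lb ⊆ s := by
    rintro c hcS hchain ⟨B₀, hB₀⟩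
    have : Nonempty c := ⟨⟨B₀, hB₀⟩⟩
    have hne : (⋂₀ c).Nonempty :=
      IsCompact.nonempty_sInter_of_directed_nonempty_isCompact_isClosed
        (IsChain.directedOn hchain.symm) (fun U hU => (hcS hU).2.1.1)
        (fun U hU => (hcS hU).2.2.isCompact) (fun U hU => (hcS hU).2.2)
    refine ⟨⋂₀ c, ⟨(Set.sInter_subset_of_mem hB₀).trans (hcS hB₀).1, ⟨hne, ?_⟩,
      isClosed_sInter (fun U hU => (hcS hU).2.2)⟩, fun s hs => Set.sInter_subset_of_mem hs⟩
    intro x hx q U hU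
    exact (hcS hU).2.1.2 x (hx U hU) q
  obtain ⟨M, -, hM⟩ := zorn_superset_nonempty S hzorn _ hTpS
  · refine ⟨M, hM.prop.1, hM.prop.2.1, ?_⟩
    -- minimal among all left ideals
    intro L' hL' hL'M
    obtain ⟨q, hq⟩ := hL'.1
    have hTq : (Set.range fun r : T => r * q) ⊆ L' := by
      rintro _ ⟨r, rfl⟩; exact hL'.2 q hq r
    have hTqS : (Set.range fun r : T => r * q) ∈ S :=
      ⟨(hTq.trans hL'M).trans hM.prop.1, aux_Tp_leftIdeal q,
        (isCompact_range (hright q)).isClosed⟩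
    have := hM.eq_of_subset hTqS ((hTq.trans hL'M))
    exact subset_antisymm hL'M (this ▸ hTq)

/-- A minimal left ideal containing `p` equals `T * p`. -/
lemma aux_min_eq_Tp [Semigroup T] {L : Set T} (hL : IsMinimalLeftIdeal L) {p : T}
    (hp : p ∈ L) : (Set.range fun q : T => q * p) = L := by
  refine hL.2 _ (aux_Tp_leftIdeal p) ?_
  rintro _ ⟨q, rfl⟩; exact hL.1.2 p hp q

/-- In a minimal left ideal, every idempotent is a right identity. -/
lemma aux_right_id {L : Set T} (hL : IsMinimalLeftIdeal L) {e : T} (he : e ∈ L)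
    (hee : e * e = e) : ∀ x ∈ L, x * e = x := by
  intro x hx
  have := aux_min_eq_Tp hL he
  rw [← this] at hx
  obtain ⟨t, rfl⟩ := hx
  rw [mul_assoc, hee]

/-- Translates of minimal left ideals are minimal left ideals. -/
lemma aux_translate {L : Set T} (hL : IsMinimalLeftIdeal L) (a : T) :
    IsMinimalLeftIdeal ((fun x => x * a) '' L) := by
  obtain ⟨⟨⟨p, hp⟩, hLl⟩, hLmin⟩ := hL
  refine ⟨⟨⟨p * a, p, hp, rfl⟩, ?_⟩, ?_⟩
  · rintro _ ⟨x, hx, rfl⟩ q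
    exact ⟨q * x, hLl x hx q, by dsimp; rw [mul_assoc]⟩
  · intro L' hL' hL'sub
    have hB : {x ∈ L | x * a ∈ L'} = L := by
      refine hLmin _ ⟨?_, ?_⟩ (fun x hx => hx.1)
      · obtain ⟨y, hy⟩ := hL'.1
        obtain ⟨x, hx, rfl⟩ := hL'sub hy
        exact ⟨x, hx, hy⟩
      · rintro x ⟨hxL, hxa⟩ q
        exact ⟨hLl x hxL q, by rw [mul_assoc]; exact hL'.2 _ hxa q⟩
    refine subset_antisymm hL'sub ?_
    rintro _ ⟨x, hx, rfl⟩
    rw [← hB] at hx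
    exact hx.2

/-- Key algebraic lemma: every element of a minimal left ideal lies in a minimal
right ideal. -/
lemma aux_mem_minimal_right (hright : ∀ p : T, Continuous fun q : T => q * p)
    {L : Set T} (hL : IsMinimalLeftIdeal L) {p : T} (hp : p ∈ L) :
    ∃ R : Set T, IsMinimalRightIdeal R ∧ p ∈ R := by
  -- first find an idempotent e ∈ L with e * p = p
  have hLTp := aux_min_eq_Tp hL hp
  -- L is closed: L = range (· * p)
  have hLcl : IsClosed L := hLTp ▸ (isCompact_range (hright p)).isClosed
  -- B = {x ∈ L | x * p = p} is a nonempty closed subsemigroup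
  have hLp : (fun x => x * p) '' L = L := by
    refine hL.2 _ ⟨⟨p * p, p, hp, rfl⟩, ?_⟩ ?_
    · rintro _ ⟨x, hx, rfl⟩ q
      exact ⟨q * x, hL.1.2 x hx q, by dsimp; rw [mul_assoc]⟩
    · rintro _ ⟨x, hx, rfl⟩; exact hL.1.2 p hp x
  have hBne : ({x ∈ L | x * p = p} : Set T).Nonempty := by
    have : p ∈ (fun x => x * p) '' L := hLp.symm ▸ hp
    obtain ⟨x, hx, hxp⟩ := this
    exact ⟨x, hx, hxp⟩
  obtain ⟨e, ⟨heL, hep⟩, hee⟩ :=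
    aux_exists_idem hright hBne
      (hLcl.inter (isClosed_eq (hright p) continuous_const))
      (by
        rintro x ⟨hxL, hxp⟩ y ⟨hyL, hyp⟩
        exact ⟨hL.1.2 y hyL x, by rw [mul_assoc, hyp, hxp]⟩)
  -- now show eT = range (e * ·) is a minimal right ideal containing p
  refine ⟨Set.range fun t : T => e * t, ⟨⟨⟨e, e, hee⟩, ?_⟩, ?_⟩, ⟨p, hep⟩⟩
  · rintro _ ⟨t, rfl⟩ q
    exact ⟨t * q, (mul_assoc e t q).symm⟩
  · -- minimality of eT
    intro R' hR' hR'sub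
    obtain ⟨r, hr⟩ := hR'.1
    obtain ⟨t, ht⟩ := hR'sub hr
    have her : e * r = r := by rw [← ht, ← mul_assoc, hee]
    -- find a ∈ L with a * (r * e) = e, using minimality of L on L·(r·e)
    have hD : (fun x => x * (r * e)) '' L = L := by
      refine hL.2 _ ⟨⟨e * (r * e), e, heL, rfl⟩, ?_⟩ ?_
      · rintro _ ⟨x, hx, rfl⟩ q
        exact ⟨q * x, hL.1.2 x hx q, by dsimp; rw [mul_assoc]⟩
      · rintro _ ⟨x, hx, rfl⟩
        dsimp only
        rw [← mul_assoc]
        exact hL.1.2 e heL (x * r)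
    have : e ∈ (fun x => x * (r * e)) '' L := hD.symm ▸ heL
    obtain ⟨a, haL, hae⟩ := this
    -- f := r * (e * a) is an idempotent in L ∩ R'
    set f : T := r * (e * a) with hf
    have hfR' : f ∈ R' := hR'.2 r hr (e * a)
    have hfL : f ∈ L := hL.1.2 (e * a) (hL.1.2 a haL e) r
    have hff : f * f = f := by
      have : a * (r * e) = e := hae
      calc f * f = r * (e * (a * (r * e)) * a) := by simp only [hf, mul_assoc]
        _ = f := by rw [this, hee]
    -- e * f = f since e * r = r
    have hef : e * f = f := by rw [hf, ← mul_assoc, her]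
    -- e * f = e since f is a right identity on L
    have hef' : e * f = e := aux_right_id hL hfL hff e heL
    have hefe : e = f := by rw [← hef', hef]
    -- hence e ∈ R', so eT ⊆ R'
    have heR' : e ∈ R' := hefe ▸ hfR'
    refine subset_antisymm hR'sub ?_
    rintro _ ⟨t', rfl⟩
    exact hR'.2 e heR' t'

end Aux

/-- In a compact Hausdorff right topological semigroup the smallest two-sided ideal
exists and equals both the union of all minimal left ideals and the union of all
minimal right ideals. -/
theorem exists_smallest_ideal [Semigroup T] [TopologicalSpace T] [CompactSpace T]
    [T2Space T] [Nonempty T] (hright : ∀ p : T, Continuous fun q : T => q * p) :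
    ∃ K : Set T, IsTwoSidedIdeal K ∧ (∀ I : Set T, IsTwoSidedIdeal I → K ⊆ I) ∧
      K = ⋃₀ {L : Set T | IsMinimalLeftIdeal L} ∧
      K = ⋃₀ {R : Set T | IsMinimalRightIdeal R} := by
  set K : Set T := ⋃₀ {L : Set T | IsMinimalLeftIdeal L} with hK
  obtain ⟨M, -, hM⟩ := aux_exists_minimal hright
    (L := (Set.univ : Set T)) ⟨Set.univ_nonempty, fun _ _ _ => trivial⟩
  have hKne : K.Nonempty := by
    obtain ⟨p, hp⟩ := hM.1.1
    exact ⟨p, M, hM, hp⟩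
  have hKleft : IsLeftIdeal K := by
    refine ⟨hKne, ?_⟩
    rintro p ⟨L, hL, hpL⟩ q
    exact ⟨L, hL, hL.1.2 p hpL q⟩
  have hKright : IsRightIdeal K := by
    refine ⟨hKne, ?_⟩
    rintro p ⟨L, hL, hpL⟩ q
    exact ⟨(fun x => x * q) '' L, aux_translate hL q, ⟨p, hpL, rfl⟩⟩
  have hKsmall : ∀ I : Set T, IsTwoSidedIdeal I → K ⊆ I := by
    rintro I ⟨hIl, hIr⟩ p ⟨L, hL, hpL⟩
    -- L ∩ I is a left ideal contained in L, hence equals L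
    obtain ⟨a, ha⟩ := hIl.1
    obtain ⟨x, hx⟩ := hL.1.1
    have hne : (L ∩ I).Nonempty := ⟨a * x, hL.1.2 x hx a, hIr.2 a ha x⟩
    have : L ∩ I = L := by
      refine hL.2 _ ⟨hne, ?_⟩ Set.inter_subset_left
      rintro y ⟨hyL, hyI⟩ q
      exact ⟨hL.1.2 y hyL q, hIl.2 y hyI q⟩
    rw [← this] at hpL
    exact hpL.2
  refine ⟨K, ⟨hKleft, hKright⟩, hKsmall, rfl, ?_⟩
  apply subset_antisymm
  · -- every element of K lies in a minimal right ideal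
    rintro p ⟨L, hL, hpL⟩
    obtain ⟨R, hR, hpR⟩ := aux_mem_minimal_right hright hL hpL
    exact ⟨R, hR, hpR⟩
  · -- every minimal right ideal is contained in K
    rintro p ⟨R, hR, hpR⟩
    obtain ⟨a, ha⟩ := hKne
    obtain ⟨x, hx⟩ := hR.1.1
    have hne : (R ∩ K).Nonempty := ⟨x * a, hR.1.2 x hx a, hKleft.2 a ha x⟩
    have : R ∩ K = R := by
      refine hR.2 _ ⟨hne, ?_⟩ Set.inter_subset_left
      rintro y ⟨hyR, hyK⟩ q
      exact ⟨hR.1.2 y hyR q, hKright.2 y hyK q⟩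
    rw [← this] at hpR
    exact hpR.2
end

section
/- Let ⟨x_n⟩ be a sequence in N and A an IP* set in (N,+). Then there exists a sum subsystem ⟨y_n⟩ of ⟨x_n⟩ such that FS(⟨y_n⟩) ∪ FP(⟨y_n⟩) ⊆ A. -/
/-!
Take an idempotent ultrafilter `U` that contains, for every `n`, the finite sums of `x` over
indices `≥ n`. Since `A` is IP*, `A ∈ U`, and also `q⁻¹A ∈ U` for every `q`, because the image
of `U` under `m ↦ q * m` is again idempotent. Hence the blocks can be chosen one at a time: the
next block sum `y` is taken from the `U`-large set of tail sums lying in `A⋆`, in `-s + A⋆` for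
every finite sum `s` already built, and in `p⁻¹A` for every finite product `p` already built.
-/

attribute [local instance] Ultrafilter.addSemigroup

/-- `FS x` : all finite sums of the sequence `x` over nonempty finite index sets. -/
def FS (x : ℕ → ℕ) : Set ℕ :=
  {s | ∃ F : Finset ℕ, F.Nonempty ∧ s = ∑ n ∈ F, x n}

/-- `FP x` : all finite products of the sequence `x` over nonempty finite index sets. -/
def FP (x : ℕ → ℕ) : Set ℕ :=
  {s | ∃ F : Finset ℕ, F.Nonempty ∧ s = ∏ n ∈ F, x n}

/-- `y` is a sum subsystem of `x`. -/
def IsSumSubsystem (y x : ℕ → ℕ) : Prop :=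
  ∃ H : ℕ → Finset ℕ, (∀ n, (H n).Nonempty) ∧
    (∀ n, ∀ i ∈ H n, ∀ j ∈ H (n + 1), i < j) ∧
    ∀ n, y n = ∑ t ∈ H n, x t

open Filter

namespace Ultrafilter

section Add

variable {M N : Type*} [AddSemigroup M] [AddSemigroup N]

theorem map_add (f : AddHom M N) (U V : Ultrafilter M) : (U + V).map f = U.map f + V.map f :=
  Ultrafilter.ext fun s => by
    change {a | {b | f (a + b) ∈ s} ∈ V} ∈ U ↔ {a | {b | f a + f b ∈ s} ∈ V} ∈ U
    simp only [_root_.map_add]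

theorem map_add_self_of_add_self (f : AddHom M N) {U : Ultrafilter M} (hU : U + U = U) :
    U.map f + U.map f = U.map f := by
  rw [← map_add, hU]

end Add

/-- Hindman–Strauss' `A⋆ = {a ∈ A | -a + A ∈ U}`. -/
def starSet {M : Type*} [Add M] (U : Ultrafilter M) (s : Set M) : Set M :=
  {a ∈ s | {b | a + b ∈ s} ∈ U}

variable {M : Type*} [AddSemigroup M] {U : Ultrafilter M} {s : Set M}

theorem starSet_subset (U : Ultrafilter M) (s : Set M) : U.starSet s ⊆ s :=
  Set.sep_subset _ _

theorem starSet_mem (hU : U + U = U) (hs : s ∈ U) : U.starSet s ∈ U :=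
  inter_mem hs (by rwa [← hU] at hs)

theorem preimage_add_starSet_mem (hU : U + U = U) {a : M} (ha : a ∈ U.starSet s) :
    (a + ·) ⁻¹' U.starSet s ∈ U := by
  have hshift : {b | {c | a + (b + c) ∈ s} ∈ U} ∈ U := by
    have h := ha.2
    rwa [← hU] at h
  refine inter_mem ha.2 ?_
  change {b | {c | a + b + c ∈ s} ∈ U} ∈ U
  simpa only [add_assoc] using hshift

end Ultrafilter

def tailSums {M : Type*} [AddCommMonoid M] (x : ℕ → M) (n : ℕ) : Set M :=
  {s | ∃ F : Finset ℕ, F.Nonempty ∧ (∀ i ∈ F, n ≤ i) ∧ s = ∑ i ∈ F, x i}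

section tailSums

variable {M : Type*} [AddCommMonoid M] (x : ℕ → M)

theorem tailSums_antitone : Antitone (tailSums x) :=
  fun _ _ hmn _ ⟨F, hF, hge, hs⟩ => ⟨F, hF, fun i hi => hmn.trans (hge i hi), hs⟩

theorem mem_tailSums_self (n : ℕ) : x n ∈ tailSums x n :=
  ⟨{n}, Finset.singleton_nonempty n, by simp, by simp⟩

theorem exists_forall_add_mem_tailSums {n : ℕ} {m : M} (hm : m ∈ tailSums x n) :
    ∃ n', ∀ m' ∈ tailSums x n', m + m' ∈ tailSums x n := by
  obtain ⟨F, hF, hge, rfl⟩ := hm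
  refine ⟨F.sup id + 1, fun _ ⟨G, hG, hge', hm'⟩ => ?_⟩
  have hFG : Disjoint F G := Finset.disjoint_left.mpr fun i hiF hiG =>
    (Finset.le_sup (f := id) hiF).not_gt (hge' i hiG)
  refine ⟨F ∪ G, hF.mono Finset.subset_union_left, ?_, by rw [Finset.sum_union hFG, hm']⟩
  intro i hi
  rcases Finset.mem_union.mp hi with hi | hi
  · exact hge i hi
  · obtain ⟨j, hj⟩ := hF
    have : j ≤ F.sup id := Finset.le_sup (f := id) hj
    have := hge j hj
    have := hge' i hi
    omega

theorem exists_idempotent_forall_tailSums_mem :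
    ∃ U : Ultrafilter M, U + U = U ∧ ∀ n, tailSums x n ∈ U := by
  let S : Set (Ultrafilter M) := ⋂ n, {U | tailSums x n ∈ U}
  have hS_nonempty : S.Nonempty := by
    apply IsCompact.nonempty_iInter_of_sequence_nonempty_isCompact_isClosed
    · exact fun n U hU => mem_of_superset hU (tailSums_antitone x n.le_succ)
    · exact fun n => ⟨pure (x n), mem_pure.mpr (mem_tailSums_self x n)⟩
    · exact (ultrafilter_isClosed_basic _).isCompact
    · exact fun n => ultrafilter_isClosed_basic _
  have hS_add : ∀ U ∈ S, ∀ V ∈ S, U + V ∈ S := by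
    simp only [S, Set.mem_iInter, Set.mem_ofPred_eq]
    intro U hU V hV n
    change {a | {b | a + b ∈ tailSums x n} ∈ V} ∈ U
    refine mem_of_superset (hU n) fun m hm => ?_
    obtain ⟨n', hn'⟩ := exists_forall_add_mem_tailSums x hm
    exact mem_of_superset (hV n') hn'
  obtain ⟨U, hUS, hU⟩ := exists_idempotent_in_compact_add_subsemigroup
    Ultrafilter.continuous_add_left S hS_nonempty
    (isClosed_iInter fun _ => ultrafilter_isClosed_basic _).isCompact hS_add
  exact ⟨U, hU, Set.mem_iInter.mp hUS⟩

end tailSums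

theorem exists_mem_tailSums_add_mem_starSet_mul_mem {R : Type*} [NonUnitalNonAssocSemiring R]
    {x : ℕ → R} {U : Ultrafilter R} (hU : U + U = U) (htail : ∀ n, tailSums x n ∈ U)
    {A : Set R} (hA : ∀ p : Ultrafilter R, p + p = p → A ∈ p) (b : ℕ) (S P : Finset R)
    (hS : ↑S ⊆ U.starSet A) :
    ∃ y ∈ tailSums x b, y ∈ U.starSet A ∧ (∀ s ∈ S, s + y ∈ U.starSet A) ∧
      ∀ p ∈ P, p * y ∈ A := by
  have hAstar : U.starSet A ∈ U := Ultrafilter.starSet_mem hU (hA U hU)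
  have hshift : ⋂ s ∈ S, (s + ·) ⁻¹' U.starSet A ∈ U :=
    (biInter_finset_mem S).mpr fun s hs => Ultrafilter.preimage_add_starSet_mem hU (hS hs)
  have hdiv : ⋂ p ∈ P, (p * ·) ⁻¹' A ∈ U := (biInter_finset_mem P).mpr fun p _ =>
    Ultrafilter.mem_map.mp (hA _ (Ultrafilter.map_add_self_of_add_self (AddHom.mulLeft p) hU))
  obtain ⟨y, ⟨⟨hyb, hyA⟩, hyS⟩, hyP⟩ :=
    Ultrafilter.nonempty_of_mem (inter_mem (inter_mem (inter_mem (htail b) hAstar) hshift) hdiv)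
  simp only [Set.mem_iInter₂, Set.mem_preimage] at hyS hyP
  exact ⟨y, hyb, hyA, hyS, hyP⟩

theorem exists_seq_of_forall_exists_step {σ : Type*} (p : σ → Prop) (r : σ → σ → Prop)
    (h : ∀ s, p s → ∃ t, p t ∧ r s t) {s₀ : σ} (h₀ : p s₀) :
    ∃ f : ℕ → σ, ∀ n, p (f n) ∧ r (f n) (f (n + 1)) := by
  choose g hgp hgr using h
  let f : ℕ → {s // p s} := fun n => Nat.rec ⟨s₀, h₀⟩ (fun _ s => ⟨g s s.2, hgp s s.2⟩) n
  refine ⟨fun n => (f n).1, fun n => ?_⟩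
  exact ⟨(f n).2, hgr _ (f n).2⟩

section Extension

variable {M : Type*}

@[to_additive]
def IsMulExtension [Mul M] (S S' : Set M) (y : M) : Prop :=
  S ⊆ S' ∧ y ∈ S' ∧ ∀ a ∈ S, a * y ∈ S'

@[to_additive]
theorem isMulExtension_union_insert_image [Mul M] [DecidableEq M] (S : Finset M) (y : M) :
    IsMulExtension ↑S ↑(S ∪ insert y (S.image (· * y))) y :=
  ⟨Finset.coe_subset.mpr Finset.subset_union_left,
    Finset.mem_union_right _ (Finset.mem_insert_self _ _),
    fun _ ha => Finset.mem_union_right _ (Finset.mem_insert_of_mem (Finset.mem_image_of_mem _ ha))⟩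

@[to_additive]
theorem prod_mem_of_isMulExtension [CommMonoid M] {y : ℕ → M} {S : ℕ → Set M}
    (hS : ∀ n, IsMulExtension (S n) (S (n + 1)) (y n)) {F : Finset ℕ} (hF : F.Nonempty) {n : ℕ}
    (hFn : F ⊆ Finset.range n) : ∏ i ∈ F, y i ∈ S n := by
  have hmono : Monotone S := monotone_nat_of_le_succ fun n => (hS n).1
  induction F using Finset.induction_on_max generalizing n with
  | empty => exact absurd hF Finset.not_nonempty_empty
  | insert a F hlt ih =>
    have ha : a + 1 ≤ n := Finset.mem_range.mp (hFn (Finset.mem_insert_self a F))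
    rw [Finset.prod_insert fun haF => lt_irrefl a (hlt a haF)]
    refine hmono ha ?_
    rcases F.eq_empty_or_nonempty with rfl | hne
    · simpa using (hS a).2.1
    · rw [mul_comm]
      exact (hS a).2.2 _ (ih hne fun i hi => Finset.mem_range.mpr (hlt i hi))

end Extension

theorem exists_isSumSubsystem_FS_subset_FP_subset {x : ℕ → ℕ} {T A : Set ℕ} (hTA : T ⊆ A)
    (hext : ∀ (b : ℕ) (S P : Finset ℕ), ↑S ⊆ T →
      ∃ y ∈ tailSums x b, y ∈ T ∧ (∀ s ∈ S, s + y ∈ T) ∧ ∀ p ∈ P, p * y ∈ A) :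
    ∃ y, IsSumSubsystem y x ∧ FS y ⊆ T ∧ FP y ⊆ A := by
  -- a stage `(H, S, P)` records the last block and all sums and all products of the blocks so far
  let Good : Finset ℕ × Finset ℕ × Finset ℕ → Prop := fun t => ↑t.2.1 ⊆ T ∧ ↑t.2.2 ⊆ A
  let Next : Finset ℕ × Finset ℕ × Finset ℕ → Finset ℕ × Finset ℕ × Finset ℕ → Prop :=
    fun s t => t.1.Nonempty ∧ (∀ i ∈ s.1, ∀ j ∈ t.1, i < j) ∧
      IsAddExtension ↑s.2.1 ↑t.2.1 (∑ i ∈ t.1, x i) ∧ IsMulExtension ↑s.2.2 ↑t.2.2 (∑ i ∈ t.1, x i)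
  have step : ∀ s, Good s → ∃ t, Good t ∧ Next s t := by
    rintro ⟨H, S, P⟩ ⟨hS, hP⟩
    obtain ⟨_, ⟨H', hH', hge, rfl⟩, hyT, hSy, hPy⟩ := hext (H.sup id + 1) S P hS
    refine ⟨(H', S ∪ insert (∑ i ∈ H', x i) (S.image (· + ∑ i ∈ H', x i)),
      P ∪ insert (∑ i ∈ H', x i) (P.image (· * ∑ i ∈ H', x i))), ⟨?_, ?_⟩, hH', ?_,
      isAddExtension_union_insert_image _ _, isMulExtension_union_insert_image _ _⟩
    · simpa [Set.insert_subset_iff, Set.image_subset_iff, hyT] using ⟨hS, hSy⟩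
    · simpa [Set.insert_subset_iff, Set.image_subset_iff, hTA hyT] using ⟨hP, hPy⟩
    · exact fun i hi j hj => Nat.lt_of_le_of_lt (Finset.le_sup (f := id) hi) (hge j hj)
  obtain ⟨f, hf⟩ :=
    exists_seq_of_forall_exists_step Good Next step (s₀ := (∅, ∅, ∅)) (by simp [Good])
  refine ⟨fun n => ∑ i ∈ (f (n + 1)).1, x i, ⟨fun n => (f (n + 1)).1, fun n => (hf n).2.1,
    fun n => (hf (n + 1)).2.2.1, fun _ => rfl⟩, ?_, ?_⟩
  · rintro _ ⟨F, hF, rfl⟩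
    obtain ⟨n, hn⟩ := F.exists_nat_subset_range
    exact (hf n).1.1 (sum_mem_of_isAddExtension (fun n => (hf n).2.2.2.1) hF hn)
  · rintro _ ⟨F, hF, rfl⟩
    obtain ⟨n, hn⟩ := F.exists_nat_subset_range
    exact (hf n).1.2 (prod_mem_of_isMulExtension (fun n => (hf n).2.2.2.2) hF hn)

/-- If `A` is an IP* set in `(ℕ,+)`, i.e. a member of every idempotent ultrafilter,
then for every sequence `x` there is a sum subsystem `y` of `x` with
`FS(y) ∪ FP(y) ⊆ A`. -/
theorem ipstar_sum_subsystem (x : ℕ → ℕ) (A : Set ℕ)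
    (hA : ∀ p : Ultrafilter ℕ, p + p = p → A ∈ p) :
    ∃ y : ℕ → ℕ, IsSumSubsystem y x ∧ FS y ∪ FP y ⊆ A := by
  obtain ⟨U, hU, htail⟩ := exists_idempotent_forall_tailSums_mem x
  obtain ⟨y, hy, hFS, hFP⟩ := exists_isSumSubsystem_FS_subset_FP_subset
    (Ultrafilter.starSet_subset U A)
    (exists_mem_tailSums_add_mem_starSet_mul_mem hU htail hA)
  exact ⟨y, hy, Set.union_subset (hFS.trans (Ultrafilter.starSet_subset U A)) hFP⟩
end

section
/- Let S be a discrete commutative semigroup and A ⊆ S. Then A is a J-set if and only if J(S) ∩ cl(A) is nonempty in βS. -/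
/-!
The nontrivial direction rests on partition regularity of J-sets: if `A ∪ B` is a J-set, so is
`A` or `B`. Granting it, the sets `X` such that `A \ X` is not a J-set form a proper filter, and
every ultrafilter finer than it contains `A` and consists of J-sets.

Partition regularity follows from Hales–Jewett. Let `F₀` witness that `A` is not a J-set, let
`F` be given, and choose `ι` so that every `F`-colouring of the words `ι → F₀` has a
monochromatic line. Perturb each `f ∈ F` by a word `w` to `t ↦ f t * ∏ j, w j (e (t, j))`, with
`e : ℕ × ι → ℕ` injective, and apply the J-property of `A ∪ B` to all perturbed sequences at
once. If for some word all of them land in `B`, the perturbation is absorbed into the shift `a`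
and `F` is realised in `B`. Otherwise colour each word by some `f` landing in `A`; along a
monochromatic line with moving coordinates `W` the perturbation equals a fixed factor times
`∏ u ∈ e '' (H × W), x u`, which realises `F₀` in `A`, a contradiction.
-/

attribute [local instance] Ultrafilter.semigroup

variable {S : Type*}

/-- The product `∏_{t ∈ H} f t` in a (commutative) semigroup, computed in increasing
order of indices; junk value `f 0` if `H = ∅`. -/
def semigroupProd [Semigroup S] (f : ℕ → S) (H : Finset ℕ) : S :=
  if h : H.Nonempty then
    (((H.erase (H.min' h)).sort (· ≤ ·)).map f).foldl (· * ·) (f (H.min' h))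
  else f 0

/-- `A` is a J-set in the commutative semigroup `S`. -/
def IsJSet [CommSemigroup S] (A : Set S) : Prop :=
  ∀ F : Finset (ℕ → S), ∃ (a : S) (H : Finset ℕ), H.Nonempty ∧
    ∀ f ∈ F, a * semigroupProd f H ∈ A

/-- `J(S)`: the ultrafilters on `S` all of whose members are J-sets. -/
def JSetUltra [CommSemigroup S] : Set (Ultrafilter S) :=
  {p | ∀ A ∈ p, IsJSet A}

theorem Ultrafilter.exists_of_partitionRegular {α : Type*} {P : Set α → Prop}
    (mono : ∀ ⦃s t⦄, s ⊆ t → P s → P t) (of_union : ∀ ⦃s t⦄, P (s ∪ t) → P s ∨ P t)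
    (not_empty : ¬ P ∅) {A : Set α} (hA : P A) : ∃ p : Ultrafilter α, A ∈ p ∧ ∀ X ∈ p, P X := by
  let F : Filter α := .comk (fun s => ¬ P (A ∩ s)) (by simpa using not_empty)
    (fun t ht s hst hs => ht (mono (Set.inter_subset_inter_right A hst) hs))
    (fun s hs t ht hst => by
      rw [Set.inter_union_distrib_left] at hst
      exact (of_union hst).elim hs ht)
  have : F.NeBot := ⟨fun h => (Filter.empty_mem_iff_bot.2 h : ¬ P (A ∩ ∅ᶜ)) (by simpa using hA)⟩
  refine ⟨.of F, Ultrafilter.of_le F (by simpa [F] using not_empty), fun X hX => ?_⟩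
  by_contra hPX
  have hXc : Xᶜ ∈ Ultrafilter.of F :=
    Ultrafilter.of_le F (by simpa [F] using fun h => hPX (mono Set.inter_subset_right h))
  exact Ultrafilter.compl_notMem_iff.2 hX hXc

lemma WithOne.exists_coe_eq_coe_mul {α : Type*} [Mul α] (a : α) (y : WithOne α) :
    ∃ z : α, (z : WithOne α) = a * y := by
  induction y using WithOne.recOneCoe with
  | one => exact ⟨a, (mul_one _).symm⟩
  | coe b => exact ⟨a * b, WithOne.coe_mul a b⟩

lemma coe_semigroupProd [CommSemigroup S] (f : ℕ → S) {H : Finset ℕ} (hH : H.Nonempty) :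
    ((semigroupProd f H : S) : WithOne S) = ∏ t ∈ H, (f t : WithOne S) := by
  rw [semigroupProd, dif_pos hH, ← List.foldl_hom (WithOne.coe : S → WithOne S) (g₁ := (· * ·))
      (g₂ := fun x y => x * ↑y) fun _ _ => rfl,
    ← Finset.mul_prod_erase H _ (H.min'_mem hH), Finset.prod_eq_multiset_prod,
    ← Finset.sort_eq _ (· ≤ ·), Multiset.map_coe, Multiset.prod_coe, List.prod_eq_foldl,
    ← List.foldl_assoc (op := ((· * ·) : WithOne S → WithOne S → WithOne S)), mul_one]
  simp only [List.foldl_map]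

lemma Combinatorics.Line.prod_apply_eq_mul {α ι M : Type*} [Fintype ι] [CommMonoid M]
    (l : Combinatorics.Line α ι) (v : ι → α → M) (x : α) :
    ∏ j, v j (l x j) = (∏ j with l.idxFun j = none, v j x) * ∏ j, (l.idxFun j).elim 1 (v j) := by
  rw [Finset.prod_filter, ← Finset.prod_mul_distrib]
  refine Finset.prod_congr rfl fun j _ => ?_
  rcases h : l.idxFun j with _ | a <;> simp [h]

lemma coe_mul_semigroupProd_of_coe_eq_mul [CommSemigroup S] {f g : ℕ → S} {y : ℕ → WithOne S}
    (hg : ∀ t, (g t : WithOne S) = f t * y t) (a : S) {H : Finset ℕ} (hH : H.Nonempty) :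
    ((a * semigroupProd g H : S) : WithOne S) = ↑(a * semigroupProd f H) * ∏ t ∈ H, y t := by
  simp only [WithOne.coe_mul, coe_semigroupProd _ hH, hg, Finset.prod_mul_distrib, mul_assoc]

lemma exists_coe_mul_semigroupProd_eq_prod_line [CommSemigroup S] {α ι : Type*} [Fintype ι]
    (s : α → ℕ → S) {e : ℕ × ι → ℕ} (he : e.Injective) (l : Combinatorics.Line α ι) (a : S)
    {H : Finset ℕ} (hH : H.Nonempty) :
    ∃ z : S, ∃ H' : Finset ℕ, H'.Nonempty ∧ ∀ x, ((z * semigroupProd (s x) H' : S) : WithOne S) =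
      a * ∏ t ∈ H, ∏ j, (s (l x j) (e (t, j)) : WithOne S) := by
  classical
  let W : Finset ι := {j | l.idxFun j = none}
  obtain ⟨z, hz⟩ := WithOne.exists_coe_eq_coe_mul a
    (∏ t ∈ H, ∏ j, (l.idxFun j).elim 1 fun y => (s y (e (t, j)) : WithOne S))
  have hH' : ((H ×ˢ W).image e).Nonempty := by
    obtain ⟨j, hj⟩ := l.proper
    exact (hH.product ⟨j, by simpa [W] using hj⟩).image e
  refine ⟨z, _, hH', fun x => ?_⟩
  have hline (t : ℕ) := l.prod_apply_eq_mul (fun j y => (s y (e (t, j)) : WithOne S)) x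
  rw [Finset.prod_congr rfl fun t _ => hline t, WithOne.coe_mul, hz, coe_semigroupProd _ hH',
    Finset.prod_image he.injOn, Finset.prod_product, Finset.prod_mul_distrib, mul_right_comm,
    mul_assoc]

lemma IsJSet.mono [CommSemigroup S] {A B : Set S} (hAB : A ⊆ B) (hA : IsJSet A) : IsJSet B :=
  fun F => (hA F).imp fun _ ⟨H, hH, hmem⟩ => ⟨H, hH, fun f hf => hAB (hmem f hf)⟩

lemma not_isJSet_empty [CommSemigroup S] : ¬ IsJSet (∅ : Set S) := fun h => by
  obtain ⟨a, -⟩ := h ∅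
  obtain ⟨_, _, _, hmem⟩ := h {fun _ => a}
  exact hmem _ (Finset.mem_singleton_self _)

theorem IsJSet.of_union [CommSemigroup S] {A B : Set S} (hAB : IsJSet (A ∪ B)) :
    IsJSet A ∨ IsJSet B := by
  classical
  refine or_iff_not_imp_left.2 fun hA F => ?_
  obtain ⟨F₀, hF₀⟩ : ∃ F₀ : Finset (ℕ → S), ∀ z H', Finset.Nonempty H' →
      ∃ x ∈ F₀, z * semigroupProd x H' ∉ A := by
    simpa [IsJSet] using hA
  obtain ⟨ι, _, hHJ⟩ := Combinatorics.Line.exists_mono_in_high_dimension F₀ F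
  obtain ⟨e, he⟩ := exists_injective_nat (ℕ × ι)
  choose mul hmul using WithOne.exists_coe_eq_coe_mul (α := S)
  let y (w : ι → F₀) (t : ℕ) : WithOne S := ∏ j, ((w j : ℕ → S) (e (t, j)) : WithOne S)
  let g (f : ℕ → S) (w : ι → F₀) (t : ℕ) : S := mul (f t) (y w t)
  have hg (a : S) {H : Finset ℕ} (hH : H.Nonempty) (f w) :
      ((a * semigroupProd (g f w) H : S) : WithOne S) = ↑(a * semigroupProd f H) * ∏ t ∈ H, y w t :=
    coe_mul_semigroupProd_of_coe_eq_mul (fun t => hmul _ _) a hH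
  obtain ⟨a, H, hH, hmem⟩ := hAB (Finset.univ.image fun p : F × (ι → F₀) => g p.1 p.2)
  by_cases hB : ∃ w, ∀ f ∈ F, a * semigroupProd (g f w) H ∈ B
  · obtain ⟨w, hw⟩ := hB
    refine ⟨mul a (∏ t ∈ H, y w t), H, hH, fun f hf => ?_⟩
    convert hw f hf using 1
    apply WithOne.coe_injective
    rw [hg a hH, WithOne.coe_mul, hmul, WithOne.coe_mul, mul_right_comm]
  · push Not at hB
    have hA' (w : ι → F₀) : ∃ f : F, a * semigroupProd (g f w) H ∈ A := by
      obtain ⟨f, hf, hfB⟩ := hB w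
      have hAB := hmem _ (Finset.mem_image_of_mem _ (Finset.mem_univ (⟨f, hf⟩, w)))
      exact ⟨⟨f, hf⟩, hAB.resolve_right hfB⟩
    choose col hcol using hA'
    obtain ⟨l, c, hc⟩ := hHJ col
    obtain ⟨z, H', hH', hz⟩ :=
      exists_coe_mul_semigroupProd_eq_prod_line Subtype.val he l (a * semigroupProd c H) hH
    obtain ⟨x, hx, hxA⟩ := hF₀ z H' hH'
    refine absurd ?_ hxA
    convert hc ⟨x, hx⟩ ▸ hcol (l ⟨x, hx⟩) using 1
    exact WithOne.coe_injective (by rw [hz ⟨x, hx⟩, hg a hH])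

/-- `A` is a J-set iff `J(S) ∩ cl A ≠ ∅` in `βS`, where `cl A = {p : A ∈ p}`. -/
theorem isJSet_iff_closure_inter [CommSemigroup S] (A : Set S) :
    IsJSet A ↔ (JSetUltra ∩ {p : Ultrafilter S | A ∈ p}).Nonempty := by
  refine ⟨fun hA => ?_, fun ⟨p, hp, hAp⟩ => hp A hAp⟩
  obtain ⟨p, hAp, hp⟩ := Ultrafilter.exists_of_partitionRegular (fun _ _ => IsJSet.mono)
    (fun _ _ => IsJSet.of_union) not_isJSet_empty hA
  exact ⟨p, hp, hAp⟩
end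

section
/- Let ⟨x_n⟩ be a sequence in N with x_{n+1} > ∑_{t=1}^n x_t for all n, and let T = ⋂_{m≥1} cl FS(⟨x_n⟩_{n≥m}) in βN. Then the following are equivalent: (1) T ∩ K(βN) ≠ ∅; (2) T ∩ cl K(βN) ≠ ∅; (3) the sequence x_{n+1} − ∑_{t=1}^n x_t is bounded. -/
attribute [local instance] Ultrafilter.addSemigroup

/-- `FSfrom x m` : finite sums of `x` over nonempty finite index sets contained
in `{m, m+1, ...}`. -/
def FSfrom (x : ℕ → ℕ) (m : ℕ) : Set ℕ :=
  {s | ∃ F : Finset ℕ, F.Nonempty ∧ (∀ n ∈ F, m ≤ n) ∧ s = ∑ n ∈ F, x n}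

/-- `I` is a two-sided ideal of `(βℕ, +)`. -/
def IsAddIdeal (I : Set (Ultrafilter ℕ)) : Prop :=
  I.Nonempty ∧ ∀ p ∈ I, ∀ q : Ultrafilter ℕ, q + p ∈ I ∧ p + q ∈ I

namespace AdamsAux

open Finset

/-- Piecewise syndetic subsets of ℕ. -/
def PWS (A : Set ℕ) : Prop :=
  ∃ b : ℕ, ∀ L : ℕ, ∃ a : ℕ, ∀ y : ℕ, a ≤ y → y ≤ a + L → ∃ i ≤ b, y + i ∈ A

theorem PWS.mono {A B : Set ℕ} (h : A ⊆ B) : PWS A → PWS B := by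
  rintro ⟨b, hb⟩
  refine ⟨b, fun L => ?_⟩
  obtain ⟨a, ha⟩ := hb L
  exact ⟨a, fun y h1 h2 => (ha y h1 h2).imp fun i hi => ⟨hi.1, h hi.2⟩⟩

theorem not_PWS_empty : ¬ PWS (∅ : Set ℕ) := by
  rintro ⟨b, hb⟩
  obtain ⟨a, ha⟩ := hb 0
  obtain ⟨i, -, hi⟩ := ha a le_rfl (Nat.le_add_right _ _)
  exact hi

theorem PWS_univ : PWS (Set.univ : Set ℕ) :=
  ⟨0, fun _ => ⟨0, fun y _ _ => ⟨0, le_rfl, trivial⟩⟩⟩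

theorem PWS.union {A B : Set ℕ} (h : PWS (A ∪ B)) : PWS A ∨ PWS B := by
  by_cases hA : PWS A
  · exact Or.inl hA
  right
  obtain ⟨b, hb⟩ := h
  rw [PWS] at hA
  push_neg at hA
  obtain ⟨L0, hL0⟩ := hA b
  refine ⟨L0 + b, fun L => ?_⟩
  obtain ⟨a, ha⟩ := hb (L + L0 + b)
  refine ⟨a, fun y hy1 hy2 => ?_⟩
  obtain ⟨y', hy'1, hy'2, hy'A⟩ := hL0 y
  obtain ⟨i, hi, hiAB⟩ := ha y' (le_trans hy1 hy'1) (by omega)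
  rcases hiAB with hA' | hB'
  · exact absurd hA' (hy'A i hi)
  · refine ⟨y' - y + i, by omega, ?_⟩
    have : y + (y' - y + i) = y' + i := by omega
    rwa [this]

theorem PWS.of_shift {A : Set ℕ} (m : ℕ) (h : PWS {y | m + y ∈ A}) : PWS A := by
  obtain ⟨b, hb⟩ := h
  refine ⟨b, fun L => ?_⟩
  obtain ⟨a, ha⟩ := hb L
  refine ⟨m + a, fun y hy1 hy2 => ?_⟩
  obtain ⟨i, hi, hmem⟩ := ha (y - m) (by omega) (by omega)
  refine ⟨i, hi, ?_⟩
  have hmem' : m + (y - m + i) ∈ A := hmem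
  have : m + (y - m + i) = y + i := by omega
  rwa [this] at hmem'


/-- The set of ultrafilters all of whose members are piecewise syndetic. -/
def Ipws : Set (Ultrafilter ℕ) := {p | ∀ A ∈ p, PWS A}

theorem mem_add {A : Set ℕ} {U V : Ultrafilter ℕ} :
    A ∈ U + V ↔ {m | {m' | m + m' ∈ A} ∈ V} ∈ U := by
  have h := Ultrafilter.eventually_add U V (· ∈ A)
  simp only [Filter.eventually_iff, Ultrafilter.mem_coe, Set.setOf_mem_eq] at h
  exact h

theorem Ipws_add_left {p : Ultrafilter ℕ} (hp : p ∈ Ipws) (q : Ultrafilter ℕ) :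
    q + p ∈ Ipws := by
  intro A hA
  rw [mem_add] at hA
  obtain ⟨m, hm⟩ := Ultrafilter.nonempty_of_mem hA
  exact PWS.of_shift m (hp _ hm)

theorem Ipws_add_right {p : Ultrafilter ℕ} (hp : p ∈ Ipws) (q : Ultrafilter ℕ) :
    p + q ∈ Ipws := by
  classical
  intro A hA
  rw [mem_add] at hA
  set B := {m | {m' | m + m' ∈ A} ∈ q} with hB
  obtain ⟨b, hb⟩ := hp _ hA
  refine ⟨b, fun L => ?_⟩
  obtain ⟨a, ha⟩ := hb L
  set T : Finset ℕ := (Finset.Icc a (a + L + b)).filter (· ∈ B) with hT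
  have hD : (⋂ z ∈ T, {m' | z + m' ∈ A}) ∈ q := by
    refine (Filter.biInter_finset_mem T).mpr fun z hz => ?_
    exact (Finset.mem_filter.mp hz).2
  obtain ⟨w, hw⟩ := Ultrafilter.nonempty_of_mem hD
  refine ⟨a + w, fun y hy1 hy2 => ?_⟩
  obtain ⟨i, hi, hiB⟩ := ha (y - w) (by omega) (by omega)
  refine ⟨i, hi, ?_⟩
  have hz : (y - w + i) ∈ T :=
    Finset.mem_filter.mpr ⟨Finset.mem_Icc.mpr ⟨by omega, by omega⟩, hiB⟩
  have hmem : (y - w + i) + w ∈ A := Set.mem_iInter₂.mp hw _ hz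
  have : (y - w + i) + w = y + i := by omega
  rwa [this] at hmem

theorem Ipws_nonempty : Ipws.Nonempty := by
  classical
  let g : Filter ℕ :=
    { sets := {A | ¬ PWS Aᶜ}
      univ_sets := by
        show ¬ PWS (Set.univ : Set ℕ)ᶜ
        rw [Set.compl_univ]
        exact not_PWS_empty
      sets_of_superset := by
        intro A B hA hAB
        show ¬ PWS Bᶜ
        intro h
        exact hA (h.mono (Set.compl_subset_compl.mpr hAB))
      inter_sets := by
        intro A B hA hB
        show ¬ PWS (A ∩ B)ᶜ
        rw [Set.compl_inter]
        intro h
        rcases h.union with h' | h'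
        exacts [hA h', hB h'] }
  have hmemg : ∀ A : Set ℕ, A ∈ g ↔ ¬ PWS Aᶜ := fun A => Iff.rfl
  have hgne : g.NeBot := by
    refine Filter.neBot_iff.mpr fun hbot => ?_
    have : (∅ : Set ℕ) ∈ g := by rw [hbot]; exact Filter.mem_bot
    rw [hmemg, Set.compl_empty] at this
    exact this PWS_univ
  obtain ⟨u, hu⟩ := Ultrafilter.exists_le g
  refine ⟨u, fun A hA => ?_⟩
  by_contra hA'
  have hAc : Aᶜ ∈ g := by rw [hmemg, compl_compl]; exact hA'
  have : Aᶜ ∈ u := hu hAc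
  exact (Ultrafilter.compl_mem_iff_notMem.mp this) hA

theorem Ipws_isClosed : IsClosed Ipws := by
  have heq : Ipws = (⋃ A ∈ {A : Set ℕ | ¬ PWS A}, {p : Ultrafilter ℕ | A ∈ p})ᶜ := by
    ext p
    simp only [Ipws, Set.mem_setOf_eq, Set.mem_compl_iff, Set.mem_iUnion, exists_prop,
      not_exists, not_and]
    constructor
    · intro h A hA hAp
      exact hA (h A hAp)
    · intro h A hAp
      by_contra hA
      exact h A hA hAp
  rw [heq]
  exact (isOpen_biUnion fun A _ => ultrafilter_isOpen_basic A).isClosed_compl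

theorem Ipws_isAddIdeal : IsAddIdeal Ipws :=
  ⟨Ipws_nonempty, fun p hp q => ⟨Ipws_add_left hp q, Ipws_add_right hp q⟩⟩


section Superincreasing

variable {x : ℕ → ℕ}

theorem comp_lt (hx : ∀ n : ℕ, ∑ t ∈ Finset.range (n + 1), x t < x (n + 1))
    {F G : Finset ℕ} {j : ℕ} (hj1 : 1 ≤ j) (hjG : j ∈ G) (hjF : j ∉ F)
    (hab : ∀ t, j < t → (t ∈ F ↔ t ∈ G)) :
    ∑ t ∈ F, x t < ∑ t ∈ G, x t := by
  classical
  have hxj : ∑ t ∈ Finset.range j, x t < x j := by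
    obtain ⟨j', rfl⟩ : ∃ j', j = j' + 1 := ⟨j - 1, by omega⟩
    exact hx j'
  have hsplitF : ∑ t ∈ F.filter (fun t => j < t), x t
      + ∑ t ∈ F.filter (fun t => ¬ j < t), x t = ∑ t ∈ F, x t :=
    Finset.sum_filter_add_sum_filter_not F _ _
  have hFlow : F.filter (fun t => ¬ j < t) ⊆ Finset.range j := by
    intro t ht
    rw [Finset.mem_filter] at ht
    rw [Finset.mem_range]
    rcases Nat.lt_or_ge t j with h | h
    · exact h
    · have : t = j := by omega
      exact absurd (this ▸ ht.1) hjF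
  have h1 : ∑ t ∈ F.filter (fun t => ¬ j < t), x t ≤ ∑ t ∈ Finset.range j, x t :=
    Finset.sum_le_sum_of_subset hFlow
  have hfeq : F.filter (fun t => j < t) = G.filter (fun t => j < t) := by
    ext t
    simp only [Finset.mem_filter]
    constructor
    · rintro ⟨h1, h2⟩; exact ⟨(hab t h2).mp h1, h2⟩
    · rintro ⟨h1, h2⟩; exact ⟨(hab t h2).mpr h1, h2⟩
  have h2 : ∑ t ∈ G.filter (fun t => j < t), x t + x j ≤ ∑ t ∈ G, x t := by
    have hjnot : j ∉ G.filter (fun t => j < t) := by simp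
    have hsub : insert j (G.filter (fun t => j < t)) ⊆ G := by
      intro t ht
      rcases Finset.mem_insert.mp ht with rfl | ht'
      · exact hjG
      · exact (Finset.mem_filter.mp ht').1
    calc ∑ t ∈ G.filter (fun t => j < t), x t + x j
        = ∑ t ∈ insert j (G.filter (fun t => j < t)), x t := by
          rw [Finset.sum_insert hjnot]; omega
      _ ≤ ∑ t ∈ G, x t := Finset.sum_le_sum_of_subset hsub
  rw [hfeq] at hsplitF
  omega

theorem exists_max_diff {F G : Finset ℕ} (h : F ≠ G) :
    ∃ j, (j ∈ F ∧ j ∉ G ∨ j ∈ G ∧ j ∉ F) ∧ ∀ t, j < t → (t ∈ F ↔ t ∈ G) := by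
  classical
  set D := (F \ G) ∪ (G \ F) with hD
  have hmemD : ∀ t, t ∈ D ↔ (t ∈ F ∧ t ∉ G ∨ t ∈ G ∧ t ∉ F) := by
    intro t
    simp [hD, Finset.mem_union, Finset.mem_sdiff]
  have hne : D.Nonempty := by
    by_contra hemp
    rw [Finset.not_nonempty_iff_eq_empty] at hemp
    apply h
    ext t
    constructor <;> intro ht <;> by_contra ht'
    · have : t ∈ D := (hmemD t).mpr (Or.inl ⟨ht, ht'⟩)
      simp [hemp] at this
    · have : t ∈ D := (hmemD t).mpr (Or.inr ⟨ht, ht'⟩)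
      simp [hemp] at this
  refine ⟨D.max' hne, (hmemD _).mp (D.max'_mem hne), ?_⟩
  intro t ht
  constructor <;> intro htm <;> by_contra ht'
  · have : t ∈ D := (hmemD t).mpr (Or.inl ⟨htm, ht'⟩)
    have := Finset.le_max' D t this
    omega
  · have : t ∈ D := (hmemD t).mpr (Or.inr ⟨htm, ht'⟩)
    have := Finset.le_max' D t this
    omega

theorem max_diff_side (hx : ∀ n : ℕ, ∑ t ∈ Finset.range (n + 1), x t < x (n + 1))
    {F G : Finset ℕ} (hF1 : ∀ t ∈ F, 1 ≤ t) (hG1 : ∀ t ∈ G, 1 ≤ t)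
    (h : ∑ t ∈ F, x t < ∑ t ∈ G, x t) :
    ∃ j, 1 ≤ j ∧ j ∈ G ∧ j ∉ F ∧ ∀ t, j < t → (t ∈ F ↔ t ∈ G) := by
  have hne : F ≠ G := by rintro rfl; omega
  obtain ⟨j, hj, hab⟩ := exists_max_diff hne
  rcases hj with ⟨hjF, hjG⟩ | ⟨hjG, hjF⟩
  · have := comp_lt hx (hF1 j hjF) hjF hjG (fun t ht => (hab t ht).symm)
    omega
  · exact ⟨j, hG1 j hjG, hjG, hjF, hab⟩

theorem gap_fact (hx : ∀ n : ℕ, ∑ t ∈ Finset.range (n + 1), x t < x (n + 1))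
    {n : ℕ} {U : Finset ℕ} (hU : ∀ t ∈ U, n + 2 ≤ t)
    {G : Finset ℕ} (hG1 : ∀ t ∈ G, 1 ≤ t)
    (h1 : ∑ t ∈ U, x t + ∑ t ∈ Finset.Icc 1 n, x t < ∑ t ∈ G, x t)
    (h2 : ∑ t ∈ G, x t < ∑ t ∈ U, x t + x (n + 1)) : False := by
  classical
  have hUn1 : (n + 1) ∉ U := fun h => by have := hU _ h; omega
  have hsumF' : ∑ t ∈ insert (n + 1) U, x t = ∑ t ∈ U, x t + x (n + 1) := by
    rw [Finset.sum_insert hUn1]; omega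
  have hF'1 : ∀ t ∈ insert (n + 1) U, 1 ≤ t := by
    intro t ht
    rcases Finset.mem_insert.mp ht with rfl | ht'
    · omega
    · have := hU t ht'; omega
  have h2' : ∑ t ∈ G, x t < ∑ t ∈ insert (n + 1) U, x t := by omega
  obtain ⟨j, hj1, hjF', hjG, hab⟩ := max_diff_side hx hG1 hF'1 h2'
  rcases Finset.mem_insert.mp hjF' with rfl | hjU
  · -- j = n+1 : G ⊆ U ∪ Icc 1 n in terms of sums
    have hGhigh : G.filter (fun t => n + 1 < t) = U := by
      ext t
      simp only [Finset.mem_filter]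
      constructor
      · rintro ⟨htG, htgt⟩
        have := (hab t htgt).mp htG
        rcases Finset.mem_insert.mp this with rfl | h'
        · omega
        · exact h'
      · intro htU
        have htgt : n + 1 < t := by have := hU t htU; omega
        exact ⟨(hab t htgt).mpr (Finset.mem_insert_of_mem htU), htgt⟩
    have hGlow : G.filter (fun t => ¬ n + 1 < t) ⊆ Finset.Icc 1 n := by
      intro t ht
      rw [Finset.mem_filter] at ht
      rw [Finset.mem_Icc]
      have := hG1 t ht.1
      have : t ≠ n + 1 := fun h => hjG (h ▸ ht.1)
      have := ht.2
      constructor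
      · exact hG1 t ht.1
      · omega
    have hsplit : ∑ t ∈ G.filter (fun t => n + 1 < t), x t
        + ∑ t ∈ G.filter (fun t => ¬ n + 1 < t), x t = ∑ t ∈ G, x t :=
      Finset.sum_filter_add_sum_filter_not G _ _
    have hle : ∑ t ∈ G.filter (fun t => ¬ n + 1 < t), x t ≤ ∑ t ∈ Finset.Icc 1 n, x t :=
      Finset.sum_le_sum_of_subset hGlow
    rw [hGhigh] at hsplit
    omega
  · -- j ∈ U, j ≥ n+2 : compare G with U ∪ Icc 1 n
    have hjn2 : n + 2 ≤ j := hU j hjU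
    have hUIdisj : Disjoint U (Finset.Icc 1 n) := by
      rw [Finset.disjoint_left]
      intro t htU htI
      have := hU t htU
      have := Finset.mem_Icc.mp htI
      omega
    have hsumW : ∑ t ∈ U ∪ Finset.Icc 1 n, x t
        = ∑ t ∈ U, x t + ∑ t ∈ Finset.Icc 1 n, x t := Finset.sum_union hUIdisj
    have hjW : j ∈ U ∪ Finset.Icc 1 n := Finset.mem_union_left _ hjU
    have hab' : ∀ t, j < t → (t ∈ G ↔ t ∈ U ∪ Finset.Icc 1 n) := by
      intro t ht
      have htn1 : n + 1 < t := by omega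
      rw [Finset.mem_union, Finset.mem_Icc]
      constructor
      · intro htG
        have := (hab t ht).mp htG
        rcases Finset.mem_insert.mp this with rfl | h'
        · omega
        · exact Or.inl h'
      · rintro (htU | htI)
        · exact (hab t ht).mpr (Finset.mem_insert_of_mem htU)
        · omega
    have := comp_lt hx hj1 hjW hjG hab'
    omega


theorem core (hx : ∀ n : ℕ, ∑ t ∈ Finset.range (n + 1), x t < x (n + 1)) {b : ℕ}
    (hb : ∀ L : ℕ, ∃ a : ℕ, ∀ y : ℕ, a ≤ y → y ≤ a + L → ∃ i ≤ b, y + i ∈ FSfrom x 1)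
    {n : ℕ} (hn : 1 ≤ n) :
    x (n + 1) ≤ ∑ t ∈ Finset.Icc 1 n, x t + b + 1 := by
  classical
  by_contra hcon
  push_neg at hcon
  set P := ∑ t ∈ Finset.Icc 1 n, x t with hP
  obtain ⟨a, ha⟩ := hb (2*b + 2*P + 2)
  obtain ⟨i0, hi0, hw⟩ := ha a le_rfl (by omega)
  obtain ⟨F, hFne, hF1, hFsum⟩ := hw
  have key : ∃ U : Finset ℕ, (∀ t ∈ U, n + 2 ≤ t) ∧
      a ≤ ∑ t ∈ U, x t + P ∧ ∑ t ∈ U, x t + P ≤ a + (2*b + 2*P + 1) := by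
    set U0 := F.filter (fun t => n + 1 < t) with hU0
    have hU0mem : ∀ t ∈ U0, n + 2 ≤ t := fun t ht => by
      have := (Finset.mem_filter.mp ht).2; omega
    have hsplitF : ∑ t ∈ U0, x t + ∑ t ∈ F.filter (fun t => ¬ n + 1 < t), x t
        = ∑ t ∈ F, x t := Finset.sum_filter_add_sum_filter_not F _ _
    by_cases hcase : n + 1 ∈ F
    · have hlow2 : F.filter (fun t => ¬ n + 1 < t)
          = insert (n+1) (F.filter (fun t => t ≤ n)) := by
        ext t
        simp only [Finset.mem_filter, Finset.mem_insert]
        constructor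
        · rintro ⟨htF, hle⟩
          rcases Nat.lt_or_ge t (n+1) with h | h
          · exact Or.inr ⟨htF, by omega⟩
          · exact Or.inl (by omega)
        · rintro (rfl | ⟨htF, hle⟩)
          · exact ⟨hcase, by omega⟩
          · exact ⟨htF, by omega⟩
      have hnotin : (n+1) ∉ F.filter (fun t => t ≤ n) := by simp
      have hlowsum : ∑ t ∈ F.filter (fun t => ¬ n + 1 < t), x t
          = x (n+1) + ∑ t ∈ F.filter (fun t => t ≤ n), x t := by
        rw [hlow2, Finset.sum_insert hnotin]
      have hlow_le : ∑ t ∈ F.filter (fun t => t ≤ n), x t ≤ P := by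
        apply Finset.sum_le_sum_of_subset
        intro t ht
        rw [Finset.mem_filter] at ht
        rw [Finset.mem_Icc]
        exact ⟨hF1 t ht.1, ht.2⟩
      set F1 := insert (n+1) (U0 ∪ Finset.Icc 1 n) with hF1def
      have hd1 : Disjoint U0 (Finset.Icc 1 n) := by
        rw [Finset.disjoint_left]; intro t h1 h2
        have := hU0mem t h1; have := Finset.mem_Icc.mp h2; omega
      have hnotin1 : (n+1) ∉ U0 ∪ Finset.Icc 1 n := by
        rw [Finset.mem_union]; rintro (h | h)
        · have := hU0mem _ h; omega
        · have := Finset.mem_Icc.mp h; omega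
      have hsumF1 : ∑ t ∈ F1, x t = ∑ t ∈ U0, x t + x (n+1) + P := by
        rw [hF1def, Finset.sum_insert hnotin1, Finset.sum_union hd1]; omega
      have hF1mem : ∀ t ∈ F1, 1 ≤ t := by
        intro t ht
        rcases Finset.mem_insert.mp ht with rfl | ht'
        · omega
        · rcases Finset.mem_union.mp ht' with h | h
          · have := hU0mem t h; omega
          · exact (Finset.mem_Icc.mp h).1
      have hwv1 : a + i0 ≤ ∑ t ∈ F1, x t := by omega
      obtain ⟨i1, hi1, hz⟩ := ha (∑ t ∈ F1, x t + 1) (by omega) (by omega)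
      obtain ⟨G, hGne, hG1, hGsum⟩ := hz
      have hlt : ∑ t ∈ F1, x t < ∑ t ∈ G, x t := by omega
      obtain ⟨j, hj1, hjG, hjF1, hab⟩ := max_diff_side hx hF1mem hG1 hlt
      have hjn2 : n + 2 ≤ j := by
        by_contra hj'
        apply hjF1
        rw [hF1def, Finset.mem_insert]
        rcases eq_or_ne j (n+1) with rfl | hne'
        · exact Or.inl rfl
        · exact Or.inr (Finset.mem_union_right _ (Finset.mem_Icc.mpr ⟨hj1, by omega⟩))
      set U1 := G.filter (fun t => n + 1 < t) with hU1def
      have hU1mem : ∀ t ∈ U1, n + 2 ≤ t := fun t ht => by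
        have := (Finset.mem_filter.mp ht).2; omega
      have hjU1 : j ∈ U1 := Finset.mem_filter.mpr ⟨hjG, by omega⟩
      have hfeq : U1.filter (fun t => j < t) = U0.filter (fun t => j < t) := by
        ext t
        constructor <;> intro ht
        · have ht1 : t ∈ U1 := (Finset.mem_filter.mp ht).1
          have htj : j < t := (Finset.mem_filter.mp ht).2
          refine Finset.mem_filter.mpr ⟨?_, htj⟩
          have htG : t ∈ G := (Finset.mem_filter.mp ht1).1
          have htn : n + 1 < t := (Finset.mem_filter.mp ht1).2
          have htF1 : t ∈ F1 := (hab t htj).mpr htG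
          rcases Finset.mem_insert.mp htF1 with heq | htF1'
          · omega
          · rcases Finset.mem_union.mp htF1' with h | h
            · exact h
            · have := (Finset.mem_Icc.mp h).2; omega
        · have ht0 : t ∈ U0 := (Finset.mem_filter.mp ht).1
          have htj : j < t := (Finset.mem_filter.mp ht).2
          refine Finset.mem_filter.mpr ⟨?_, htj⟩
          have htn : n + 1 < t := (Finset.mem_filter.mp ht0).2
          have htF1 : t ∈ F1 :=
            Finset.mem_insert_of_mem (Finset.mem_union_left _ ht0)
          exact Finset.mem_filter.mpr ⟨(hab t htj).mp htF1, htn⟩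
      have hsplitU1 : ∑ t ∈ U1.filter (fun t => j < t), x t
          + ∑ t ∈ U1.filter (fun t => ¬ j < t), x t = ∑ t ∈ U1, x t :=
        Finset.sum_filter_add_sum_filter_not U1 _ _
      have hsplitU0 : ∑ t ∈ U0.filter (fun t => j < t), x t
          + ∑ t ∈ U0.filter (fun t => ¬ j < t), x t = ∑ t ∈ U0, x t :=
        Finset.sum_filter_add_sum_filter_not U0 _ _
      have hxj_low : ∑ t ∈ U1.filter (fun t => j < t), x t + x j ≤ ∑ t ∈ U1, x t := by
        have hjnot : j ∉ U1.filter (fun t => j < t) := by simp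
        have hsub : insert j (U1.filter (fun t => j < t)) ⊆ U1 := by
          intro t ht
          rcases Finset.mem_insert.mp ht with rfl | ht'
          · exact hjU1
          · exact (Finset.mem_filter.mp ht').1
        calc ∑ t ∈ U1.filter (fun t => j < t), x t + x j
            = ∑ t ∈ insert j (U1.filter (fun t => j < t)), x t := by
              rw [Finset.sum_insert hjnot]; omega
          _ ≤ _ := Finset.sum_le_sum_of_subset hsub
      have hU0low_sub : U0.filter (fun t => ¬ j < t) ⊆ Finset.Ico (n+2) j := by
        intro t ht
        rw [Finset.mem_filter] at ht
        rw [Finset.mem_Ico]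
        have h1 := hU0mem t ht.1
        have h2 := ht.2
        have h3 : t ≠ j := by
          rintro rfl
          apply hjF1
          rw [hF1def]
          exact Finset.mem_insert_of_mem (Finset.mem_union_left _ ht.1)
        exact ⟨h1, by omega⟩
      have hU0low_le : ∑ t ∈ U0.filter (fun t => ¬ j < t), x t
          ≤ ∑ t ∈ Finset.Ico (n+2) j, x t := Finset.sum_le_sum_of_subset hU0low_sub
      have hxj_big : ∑ t ∈ Finset.range j, x t < x j := by
        obtain ⟨j', rfl⟩ : ∃ j', j = j' + 1 := ⟨j - 1, by omega⟩
        exact hx j'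
      have hrange_split : ∑ t ∈ Finset.range (n+2), x t + ∑ t ∈ Finset.Ico (n+2) j, x t
          = ∑ t ∈ Finset.range j, x t := by
        simp only [Finset.range_eq_Ico]
        exact Finset.sum_Ico_consecutive _ (Nat.zero_le _) (by omega)
      have hrange_n2 : ∑ t ∈ Finset.range (n+2), x t
          = ∑ t ∈ Finset.range (n+1), x t + x (n+1) := Finset.sum_range_succ x (n+1)
      have hPle : P ≤ ∑ t ∈ Finset.range (n+1), x t := by
        apply Finset.sum_le_sum_of_subset
        intro t ht
        rw [Finset.mem_Icc] at ht
        rw [Finset.mem_range]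
        omega
      rw [hfeq] at hxj_low
      have hu1 : ∑ t ∈ U0, x t + x (n+1) + P + 1 ≤ ∑ t ∈ U1, x t := by omega
      have hU1G : ∑ t ∈ U1, x t ≤ ∑ t ∈ G, x t :=
        Finset.sum_le_sum_of_subset (Finset.filter_subset _ _)
      exact ⟨U1, hU1mem, by omega, by omega⟩
    · have hlow_sub : F.filter (fun t => ¬ n + 1 < t) ⊆ Finset.Icc 1 n := by
        intro t ht
        rw [Finset.mem_filter] at ht
        rw [Finset.mem_Icc]
        have h1 := hF1 t ht.1
        have h3 : t ≠ n+1 := by rintro rfl; exact hcase ht.1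
        have h2 := ht.2
        exact ⟨h1, by omega⟩
      have hlow_le : ∑ t ∈ F.filter (fun t => ¬ n + 1 < t), x t ≤ P :=
        Finset.sum_le_sum_of_subset hlow_sub
      exact ⟨U0, hU0mem, by omega, by omega⟩
  obtain ⟨U, hU, hva, hvb⟩ := key
  obtain ⟨i, hi, hz⟩ := ha (∑ t ∈ U, x t + P + 1) (by omega) (by omega)
  obtain ⟨G, hGne, hG1, hGsum⟩ := hz
  exact gap_fact hx hU hG1 (by omega) (by omega)


theorem syndetic_aux (B : ℕ)
    (hd : ∀ n : ℕ, x (n + 1) ≤ ∑ t ∈ Finset.range (n + 1), x t + B)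
    {m : ℕ} (hm : 1 ≤ m) :
    ∀ n : ℕ, ∀ y, y ≤ ∑ t ∈ Finset.Icc m n, x t →
      ∃ F ⊆ Finset.Icc m n, ∑ t ∈ F, x t ≤ y ∧
        y ≤ ∑ t ∈ F, x t + (∑ t ∈ Finset.range m, x t + B) := by
  intro n
  induction n with
  | zero =>
    intro y hy
    have hemp : Finset.Icc m 0 = ∅ := Finset.Icc_eq_empty (by omega)
    rw [hemp] at hy
    simp only [Finset.sum_empty] at hy
    exact ⟨∅, by simp, by simp, by simp; omega⟩
  | succ n ih =>
    intro y hy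
    by_cases hmn : m ≤ n + 1
    · have hnotmem : (n+1) ∉ Finset.Icc m n := by simp
      have hIcc : Finset.Icc m (n+1) = insert (n+1) (Finset.Icc m n) := by
        ext t
        simp only [Finset.mem_Icc, Finset.mem_insert]
        omega
      have hsum : ∑ t ∈ Finset.Icc m (n+1), x t
          = x (n+1) + ∑ t ∈ Finset.Icc m n, x t := by
        rw [hIcc, Finset.sum_insert hnotmem]
      by_cases h1 : y ≤ ∑ t ∈ Finset.Icc m n, x t
      · obtain ⟨F, hF, h2, h3⟩ := ih y h1
        exact ⟨F, hF.trans (by rw [hIcc]; exact Finset.subset_insert _ _), h2, h3⟩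
      · by_cases h2 : x (n+1) ≤ y
        · obtain ⟨F, hF, h3, h4⟩ := ih (y - x (n+1)) (by omega)
          have hFnot : (n+1) ∉ F := fun hmem => hnotmem (hF hmem)
          refine ⟨insert (n+1) F, ?_, ?_, ?_⟩
          · rw [hIcc]; exact Finset.insert_subset_insert _ hF
          · rw [Finset.sum_insert hFnot]; omega
          · rw [Finset.sum_insert hFnot]; omega
        · refine ⟨Finset.Icc m n, by rw [hIcc]; exact Finset.subset_insert _ _, by omega, ?_⟩
          have hXd := hd n
          have hsplit : ∑ t ∈ Finset.range (n+1), x t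
              = ∑ t ∈ Finset.range m, x t + ∑ t ∈ Finset.Icc m n, x t := by
            have : ∑ t ∈ Finset.Ico 0 m, x t + ∑ t ∈ Finset.Ico m (n+1), x t
                = ∑ t ∈ Finset.Ico 0 (n+1), x t :=
              Finset.sum_Ico_consecutive _ (Nat.zero_le _) hmn
            simp only [Finset.range_eq_Ico]
            rw [← this]
            congr 1
          omega
    · have hemp : Finset.Icc m (n+1) = ∅ := Finset.Icc_eq_empty (by omega)
      rw [hemp] at hy
      simp only [Finset.sum_empty] at hy
      exact ⟨∅, by simp, by simp, by simp; omega⟩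

theorem syndetic (hx : ∀ n : ℕ, ∑ t ∈ Finset.range (n + 1), x t < x (n + 1)) (B : ℕ)
    (hd : ∀ n : ℕ, x (n + 1) ≤ ∑ t ∈ Finset.range (n + 1), x t + B)
    {m : ℕ} (hm : 1 ≤ m) :
    ∃ Gm : ℕ, ∀ c : ℕ, ∃ i ≤ Gm, c + i ∈ FSfrom x m := by
  classical
  set C := ∑ t ∈ Finset.range m, x t + B with hC
  refine ⟨C + x m, fun c => ?_⟩
  have hxpos : ∀ t, 1 ≤ t → 1 ≤ x t := by
    intro t ht
    obtain ⟨t', rfl⟩ : ∃ t', t = t' + 1 := ⟨t - 1, by omega⟩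
    have := hx t'
    omega
  set y := c + C with hy
  have hbig : y ≤ ∑ t ∈ Finset.Icc m (y + m), x t := by
    calc y ≤ ∑ _t ∈ Finset.Icc m (y + m), 1 := by
          rw [Finset.sum_const, smul_eq_mul, mul_one, Nat.card_Icc]
          omega
      _ ≤ ∑ t ∈ Finset.Icc m (y + m), x t :=
          Finset.sum_le_sum fun t ht => hxpos t (le_trans hm (Finset.mem_Icc.mp ht).1)
  obtain ⟨F, hFsub, h1, h2⟩ := syndetic_aux B hd hm (y + m) y hbig
  by_cases hFne : F.Nonempty
  · refine ⟨∑ t ∈ F, x t - c, by omega, ?_⟩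
    have heq : c + (∑ t ∈ F, x t - c) = ∑ t ∈ F, x t := by omega
    rw [heq]
    exact ⟨F, hFne, fun t ht => (Finset.mem_Icc.mp (hFsub ht)).1, rfl⟩
  · rw [Finset.not_nonempty_iff_eq_empty] at hFne
    rw [hFne] at h1 h2
    simp only [Finset.sum_empty] at h1 h2
    have hc : c = 0 := by omega
    refine ⟨x m, by omega, ?_⟩
    rw [hc, Nat.zero_add]
    exact ⟨{m}, Finset.singleton_nonempty m, by simp, by simp⟩

theorem FSfrom_mono {m m' : ℕ} (h : m ≤ m') : FSfrom x m' ⊆ FSfrom x m := by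
  rintro s ⟨F, h1, h2, h3⟩
  exact ⟨F, h1, fun t ht => le_trans h (h2 t ht), h3⟩

end Superincreasing

end AdamsAux

/-- Adams' theorem: for a sequence with `x (n+1) > ∑_{t ≤ n} x t` and
`T = ⋂_m cl FS(⟨x_n⟩_{n ≥ m})`, the conditions `T ∩ K(βℕ) ≠ ∅`,
`T ∩ cl K(βℕ) ≠ ∅`, and boundedness of `x (n+1) - ∑_{t ≤ n} x t` are equivalent. -/
theorem adams_minimal_characterization (x : ℕ → ℕ)
    (hx : ∀ n : ℕ, x (n + 1) > ∑ t ∈ Finset.range (n + 1), x t)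
    (K : Set (Ultrafilter ℕ))
    (hK : IsAddIdeal K ∧ ∀ I : Set (Ultrafilter ℕ), IsAddIdeal I → K ⊆ I) :
    (((⋂ m : ℕ, {p : Ultrafilter ℕ | FSfrom x m ∈ p}) ∩ K).Nonempty ↔
        ((⋂ m : ℕ, {p : Ultrafilter ℕ | FSfrom x m ∈ p}) ∩ closure K).Nonempty) ∧
      (((⋂ m : ℕ, {p : Ultrafilter ℕ | FSfrom x m ∈ p}) ∩ closure K).Nonempty ↔
        ∃ B : ℕ, ∀ n : ℕ, x (n + 1) - ∑ t ∈ Finset.range (n + 1), x t ≤ B) := by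
  classical
  obtain ⟨⟨hKne, hKideal⟩, hKmin⟩ := hK
  have hx' : ∀ n : ℕ, ∑ t ∈ Finset.range (n + 1), x t < x (n + 1) := hx
  have hKI : K ⊆ AdamsAux.Ipws := hKmin _ AdamsAux.Ipws_isAddIdeal
  have hclKI : closure K ⊆ AdamsAux.Ipws := closure_minimal hKI AdamsAux.Ipws_isClosed
  have h23 : ((⋂ m : ℕ, {p : Ultrafilter ℕ | FSfrom x m ∈ p}) ∩ closure K).Nonempty →
      ∃ B : ℕ, ∀ n : ℕ, x (n + 1) - ∑ t ∈ Finset.range (n + 1), x t ≤ B := by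
    rintro ⟨p, hpT, hpK⟩
    have hp1 : FSfrom x 1 ∈ p := Set.mem_iInter.mp hpT 1
    obtain ⟨b, hb⟩ := hclKI hpK _ hp1
    refine ⟨b + 1 + x 1, fun n => ?_⟩
    cases n with
    | zero =>
      show x 1 - ∑ t ∈ Finset.range 1, x t ≤ b + 1 + x 1
      omega
    | succ n =>
      have hcore := AdamsAux.core hx' hb (by omega : 1 ≤ n + 1)
      have hsub : ∑ t ∈ Finset.Icc 1 (n+1), x t ≤ ∑ t ∈ Finset.range (n+1+1), x t := by
        apply Finset.sum_le_sum_of_subset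
        intro t ht
        rw [Finset.mem_Icc] at ht
        rw [Finset.mem_range]
        omega
      omega
  have h31 : (∃ B : ℕ, ∀ n : ℕ, x (n + 1) - ∑ t ∈ Finset.range (n + 1), x t ≤ B) →
      ((⋂ m : ℕ, {p : Ultrafilter ℕ | FSfrom x m ∈ p}) ∩ K).Nonempty := by
    rintro ⟨B, hB⟩
    have hd : ∀ n : ℕ, x (n + 1) ≤ ∑ t ∈ Finset.range (n + 1), x t + B := by
      intro n
      have h1 := hB n
      have h2 := hx n
      omega
    obtain ⟨q0, hq0⟩ := hKne
    set L : Set (Ultrafilter ℕ) := Set.range (fun p : Ultrafilter ℕ => p + q0) with hLdef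
    have hLK : L ⊆ K := by rintro _ ⟨p, rfl⟩; exact (hKideal q0 hq0 p).1
    have hLcomp : IsCompact L := isCompact_range (Ultrafilter.continuous_add_left q0)
    have hLclosed : IsClosed L := hLcomp.isClosed
    have hne : ∀ m : ℕ, (L ∩ {p : Ultrafilter ℕ | FSfrom x (m+1) ∈ p}).Nonempty := by
      intro m
      obtain ⟨Gm, hGm⟩ := AdamsAux.syndetic hx' B hd (m := m+1) (by omega)
      have hcover : (⋃ i ∈ Set.Iic Gm, {c : ℕ | c + i ∈ FSfrom x (m+1)}) ∈ q0 := by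
        have hsub : (Set.univ : Set ℕ) ⊆
            ⋃ i ∈ Set.Iic Gm, {c : ℕ | c + i ∈ FSfrom x (m+1)} := by
          intro c _
          obtain ⟨i, hi, hci⟩ := hGm c
          exact Set.mem_biUnion (Set.mem_Iic.mpr hi) hci
        exact Filter.mem_of_superset Filter.univ_mem hsub
      obtain ⟨i, hi, hiq⟩ :=
        (Ultrafilter.finite_biUnion_mem_iff (Set.finite_Iic Gm)).mp hcover
      refine ⟨pure i + q0, ⟨pure i, rfl⟩, ?_⟩
      show FSfrom x (m+1) ∈ pure i + q0
      rw [AdamsAux.mem_add, Ultrafilter.mem_pure]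
      show {m' | i + m' ∈ FSfrom x (m+1)} ∈ q0
      have heq : {m' | i + m' ∈ FSfrom x (m+1)} = {c | c + i ∈ FSfrom x (m+1)} := by
        ext c
        simp [Nat.add_comm]
      rw [heq]
      exact hiq
    set V : ℕ → Set (Ultrafilter ℕ) := fun m => L ∩ {p | FSfrom x (m+1) ∈ p} with hV
    have hVanti : ∀ m, V (m+1) ⊆ V m := by
      intro m
      apply Set.inter_subset_inter_right
      intro p hp
      exact Filter.mem_of_superset hp (AdamsAux.FSfrom_mono (by omega))
    have hVclosed : ∀ m, IsClosed (V m) :=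
      fun m => hLclosed.inter (ultrafilter_isClosed_basic _)
    obtain ⟨p, hp⟩ :=
      IsCompact.nonempty_iInter_of_sequence_nonempty_isCompact_isClosed V hVanti hne
        ((hVclosed 0).isCompact) hVclosed
    have hpL : p ∈ L := (Set.mem_iInter.mp hp 0).1
    refine ⟨p, ?_, hLK hpL⟩
    refine Set.mem_iInter.mpr fun m => ?_
    have hm := (Set.mem_iInter.mp hp m).2
    exact Filter.mem_of_superset hm (AdamsAux.FSfrom_mono (by omega))
  refine ⟨⟨fun h => ?_, fun h => h31 (h23 h)⟩, ⟨h23, fun h3 => ?_⟩⟩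
  · obtain ⟨p, h1, h2⟩ := h
    exact ⟨p, h1, subset_closure h2⟩
  · obtain ⟨p, h1, h2⟩ := h31 h3
    exact ⟨p, h1, subset_closure h2⟩
end

section
/- For any sequence ⟨x_n⟩ in a semigroup (S,·), the set ⋂_{m≥1} cl FP(⟨x_n⟩_{n≥m}) is a compact subsemigroup of βS; in particular it contains an idempotent. -/
attribute [local instance] Ultrafilter.semigroup

/-!
The set is an intersection of basic clopen sets of `βS`, hence compact. It is nonempty because the
sets `cl FP(⟨a_n⟩_{n≥m})` decrease in `m`, each containing the principal ultrafilter at `a_m`.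
It is closed under the product since for `s ∈ FP(⟨a_n⟩_{n≥m})` there is `k` with
`s · FP(⟨a_n⟩_{n≥k}) ⊆ FP(⟨a_n⟩_{n≥m})`. Ellis' theorem then yields an idempotent.
-/

namespace Hindman

variable {S : Type*} [Semigroup S]

/-- `⋂_m cl FP(⟨a_n⟩_{n≥m})` in `βS`. -/
def FPLimits (a : Stream' S) : Set (Ultrafilter S) :=
  ⋂ m : ℕ, {p : Ultrafilter S | FP (a.drop m) ∈ p}

theorem FP_drop_succ_subset (a : Stream' S) (m : ℕ) : FP (a.drop (m + 1)) ⊆ FP (a.drop m) := by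
  rw [← Stream'.drop_drop, ← Stream'.tail_eq_drop]
  exact fun _ => FP.tail _ _

theorem isCompact_FPLimits (a : Stream' S) : IsCompact (FPLimits a) :=
  (isClosed_iInter fun _ => ultrafilter_isClosed_basic _).isCompact

theorem FPLimits_nonempty (a : Stream' S) : (FPLimits a).Nonempty :=
  IsCompact.nonempty_iInter_of_sequence_nonempty_isCompact_isClosed _
    (fun m _ hp => Filter.mem_of_superset hp (FP_drop_succ_subset a m))
    (fun _ => ⟨pure _, Ultrafilter.mem_pure.mpr (FP.head _)⟩)
    (ultrafilter_isClosed_basic _).isCompact (fun _ => ultrafilter_isClosed_basic _)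

theorem mul_mem_FPLimits {a : Stream' S} {p q : Ultrafilter S} (hp : p ∈ FPLimits a)
    (hq : q ∈ FPLimits a) : p * q ∈ FPLimits a := by
  simp only [FPLimits, Set.mem_iInter, Set.mem_ofPred_eq] at hp hq ⊢
  intro m
  change ∀ᶠ s in ↑(p * q), s ∈ FP (a.drop m)
  rw [Ultrafilter.eventually_mul]
  filter_upwards [hp m] with s hs
  obtain ⟨k, hk⟩ := FP.mul hs
  filter_upwards [hq (m + k)] with t ht
  exact hk t (by rwa [Stream'.drop_drop])

end Hindman

/-- For any sequence `a` in a semigroup `S`, the set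
`⋂_m cl FP(⟨a_n⟩_{n≥m}) = ⋂_m {p ∈ βS : FP(a.drop m) ∈ p}` is a compact
subsemigroup of `βS`; in particular it contains an idempotent. -/
theorem inter_clFP_compact_subsemigroup {S : Type*} [Semigroup S] (a : Stream' S) :
    IsCompact (⋂ m : ℕ, {p : Ultrafilter S | Hindman.FP (a.drop m) ∈ p}) ∧
      (∀ p ∈ ⋂ m : ℕ, {p : Ultrafilter S | Hindman.FP (a.drop m) ∈ p},
        ∀ q ∈ ⋂ m : ℕ, {p : Ultrafilter S | Hindman.FP (a.drop m) ∈ p},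
          p * q ∈ ⋂ m : ℕ, {p : Ultrafilter S | Hindman.FP (a.drop m) ∈ p}) ∧
      ∃ p ∈ ⋂ m : ℕ, {p : Ultrafilter S | Hindman.FP (a.drop m) ∈ p}, p * p = p :=
  ⟨Hindman.isCompact_FPLimits a, fun _ hp _ hq => Hindman.mul_mem_FPLimits hp hq,
    exists_idempotent_in_compact_subsemigroup Ultrafilter.continuous_mul_left _
      (Hindman.FPLimits_nonempty a) (Hindman.isCompact_FPLimits a)
      fun _ hp _ hq => Hindman.mul_mem_FPLimits hp hq⟩
end

section
/- Δ* = {p ∈ βN : every A ∈ p has positive upper Banach density d*(A) > 0} is a closed two-sided ideal of (βN,+); consequently cl K(βN) ⊆ Δ*. -/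
open scoped Classical

attribute [local instance] Ultrafilter.addSemigroup

/-- Upper Banach density of `A ⊆ ℕ`:
`d*(A) = sup {α ∈ ℝ : ∀ k, ∃ n > k, ∃ a, |A ∩ {a+1, …, a+n}| ≥ α·n}`. -/
noncomputable def bannachDensity (A : Set ℕ) : ℝ :=
  sSup {α : ℝ | ∀ k : ℕ, ∃ n : ℕ, n > k ∧ ∃ a : ℕ,
    α * n ≤ ((Finset.Icc (a + 1) (a + n)).filter (· ∈ A)).card}

/-- `Δ* = {p ∈ βℕ : every member of p has positive upper Banach density}`. -/
noncomputable def DeltaStar : Set (Ultrafilter ℕ) :=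
  {p | ∀ A ∈ p, 0 < bannachDensity A}

/-!
A member `A` of `q + p` contains a translate `{b | a + b ∈ A}` that lies in `p`, and a member
of `p + q` contains a set in `p` each of whose finite subsets translates into `A`; translating
finite windows does not lower upper Banach density, so both sums lie in `Δ*` when `p` does.
Being in `Δ*` means avoiding every density-zero set, which is a closed condition, and `Δ*` is
nonempty because the density-zero sets form a proper ideal of `𝒫 ℕ` (upper Banach density is
subadditive). The closure of `K(βℕ)` then lies in the closed ideal `Δ*`.
-/

open Finset

theorem Ultrafilter.exists_forall_not_of_ideal {α : Type*} (P : Set α → Prop) (hempty : P ∅)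
    (hmono : ∀ t, P t → ∀ s ⊆ t, P s) (hunion : ∀ s, P s → ∀ t, P t → P (s ∪ t))
    (huniv : ¬ P Set.univ) : ∃ u : Ultrafilter α, ∀ s ∈ u, ¬ P s := by
  let f := Filter.comk P hempty hmono hunion
  have : f.NeBot := Filter.neBot_iff.2 fun h => huniv <| by
    simpa using Filter.mem_comk.1 (h ▸ Filter.mem_bot : ∅ ∈ f)
  exact ⟨Ultrafilter.of f, fun s hs hPs =>
    Ultrafilter.compl_notMem_iff.2 hs (Ultrafilter.of_le f (Filter.compl_mem_comk.2 hPs))⟩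

noncomputable def windowCount (A : Set ℕ) (a n : ℕ) : ℕ :=
  ((Icc (a + 1) (a + n)).filter (· ∈ A)).card

theorem windowCount_le (A : Set ℕ) (a n : ℕ) : windowCount A a n ≤ n :=
  (card_filter_le _ _).trans (by simp)

theorem windowCount_univ (a n : ℕ) : windowCount Set.univ a n = n := by
  simp [windowCount]

theorem windowCount_empty (a n : ℕ) : windowCount ∅ a n = 0 := by
  simp [windowCount]

theorem windowCount_union_le (X Y : Set ℕ) (a n : ℕ) :
    windowCount (X ∪ Y) a n ≤ windowCount X a n + windowCount Y a n := by
  unfold windowCount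
  simpa only [Set.mem_union, filter_or] using card_union_le _ _

theorem windowCount_le_of_add_mem {A B : Set ℕ} {a n b : ℕ}
    (h : ∀ x ∈ (Icc (a + 1) (a + n)).filter (· ∈ B), x + b ∈ A) :
    windowCount B a n ≤ windowCount A (a + b) n := by
  unfold windowCount
  rw [← card_image_of_injective _ (add_left_injective b)]
  refine card_le_card fun y hy => ?_
  obtain ⟨x, hx, rfl⟩ := mem_image.1 hy
  have hxI := mem_Icc.1 (mem_filter.1 hx).1
  exact mem_filter.2 ⟨mem_Icc.2 (by omega), h x hx⟩

def bannachDensitySet (A : Set ℕ) : Set ℝ :=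
  {α : ℝ | ∀ k : ℕ, ∃ n : ℕ, n > k ∧ ∃ a : ℕ, α * n ≤ windowCount A a n}

theorem bannachDensity_eq_sSup (A : Set ℕ) : bannachDensity A = sSup (bannachDensitySet A) := rfl

theorem zero_mem_bannachDensitySet (A : Set ℕ) : (0 : ℝ) ∈ bannachDensitySet A :=
  fun k => ⟨k + 1, k.lt_succ_self, 0, by rw [zero_mul]; positivity⟩

theorem bannachDensitySet_subset_Iic_one (A : Set ℕ) : bannachDensitySet A ⊆ Set.Iic 1 := by
  intro α hα
  obtain ⟨n, hn, a, h⟩ := hα 0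
  have hn : (0 : ℝ) < n := by exact_mod_cast hn
  have : (windowCount A a n : ℝ) ≤ n := by exact_mod_cast windowCount_le A a n
  exact le_of_mul_le_mul_right (by linarith) hn

theorem bddAbove_bannachDensitySet (A : Set ℕ) : BddAbove (bannachDensitySet A) :=
  ⟨1, bannachDensitySet_subset_Iic_one A⟩

theorem le_bannachDensity {A : Set ℕ} {α : ℝ} (h : α ∈ bannachDensitySet A) :
    α ≤ bannachDensity A :=
  le_csSup (bddAbove_bannachDensitySet A) h

theorem bannachDensity_nonneg (A : Set ℕ) : 0 ≤ bannachDensity A :=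
  le_bannachDensity (zero_mem_bannachDensitySet A)

theorem bannachDensity_le_of_bannachDensitySet_subset {A B : Set ℕ}
    (h : bannachDensitySet B ⊆ bannachDensitySet A) : bannachDensity B ≤ bannachDensity A :=
  csSup_le_csSup (bddAbove_bannachDensitySet A) ⟨0, zero_mem_bannachDensitySet B⟩ h

theorem bannachDensity_empty : bannachDensity ∅ = 0 := by
  rw [bannachDensity_eq_sSup]
  refine le_antisymm (csSup_le ⟨0, zero_mem_bannachDensitySet ∅⟩ fun α hα => ?_)
    (bannachDensity_nonneg ∅)
  obtain ⟨n, hn, a, h⟩ := hα 0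
  rw [windowCount_empty, Nat.cast_zero] at h
  exact nonpos_of_mul_nonpos_left h (by exact_mod_cast hn)

theorem bannachDensity_univ_pos : 0 < bannachDensity Set.univ :=
  zero_lt_one.trans_le <| le_bannachDensity fun k =>
    ⟨k + 1, k.lt_succ_self, 0, by rw [windowCount_univ, one_mul]⟩

theorem bannachDensity_le_of_forall_finset_exists_add_mem {A B : Set ℕ}
    (h : ∀ F : Finset ℕ, ↑F ⊆ B → ∃ b, ∀ x ∈ F, x + b ∈ A) :
    bannachDensity B ≤ bannachDensity A := by
  refine bannachDensity_le_of_bannachDensitySet_subset fun α hα k => ?_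
  obtain ⟨n, hn, a, hα⟩ := hα k
  obtain ⟨b, hb⟩ := h ((Icc (a + 1) (a + n)).filter (· ∈ B)) fun x hx => (mem_filter.1 hx).2
  exact ⟨n, hn, a + b, hα.trans (by exact_mod_cast windowCount_le_of_add_mem hb)⟩

theorem bannachDensity_mono {A B : Set ℕ} (h : A ⊆ B) : bannachDensity A ≤ bannachDensity B :=
  bannachDensity_le_of_forall_finset_exists_add_mem fun _ hF => ⟨0, fun _ hx => h (hF hx)⟩

theorem bannachDensity_preimage_add_le (A : Set ℕ) (a : ℕ) :
    bannachDensity ((a + ·) ⁻¹' A) ≤ bannachDensity A :=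
  bannachDensity_le_of_forall_finset_exists_add_mem fun _ hF =>
    ⟨a, fun x hx => add_comm a x ▸ hF hx⟩

theorem sub_mem_bannachDensitySet_of_union {X Y : Set ℕ} {α β : ℝ}
    (hα : α ∈ bannachDensitySet (X ∪ Y)) (hβ : β ∉ bannachDensitySet X) :
    α - β ∈ bannachDensitySet Y := by
  simp only [bannachDensitySet, Set.mem_ofPred_eq, not_forall, not_exists, not_and, not_le] at hβ
  obtain ⟨k₀, hk₀⟩ := hβ
  intro k
  obtain ⟨n, hn, a, hna⟩ := hα (max k k₀)
  have hX := hk₀ n (lt_of_le_of_lt (le_max_right k k₀) hn) a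
  have hXY : (windowCount (X ∪ Y) a n : ℝ) ≤ windowCount X a n + windowCount Y a n := by
    exact_mod_cast windowCount_union_le X Y a n
  exact ⟨n, lt_of_le_of_lt (le_max_left k k₀) hn, a, by linarith [sub_mul α β n]⟩

theorem bannachDensity_union_le (X Y : Set ℕ) :
    bannachDensity (X ∪ Y) ≤ bannachDensity X + bannachDensity Y := by
  refine csSup_le ⟨0, zero_mem_bannachDensitySet _⟩ fun α hα => ?_
  suffices α - bannachDensity Y ≤ bannachDensity X by linarith
  refine le_of_forall_gt_imp_ge_of_dense fun β hβ => ?_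
  have hβ' : β ∉ bannachDensitySet X := fun h => (le_bannachDensity h).not_gt hβ
  linarith [le_bannachDensity (sub_mem_bannachDensitySet_of_union hα hβ')]

theorem DeltaStar_nonempty : DeltaStar.Nonempty := by
  obtain ⟨u, hu⟩ := Ultrafilter.exists_forall_not_of_ideal (bannachDensity · ≤ 0)
    bannachDensity_empty.le (fun t ht s hs => (bannachDensity_mono hs).trans ht)
    (fun s hs t ht => by linarith [bannachDensity_union_le s t])
    bannachDensity_univ_pos.not_ge
  exact ⟨u, fun A hA => not_le.1 (hu A hA)⟩

theorem isClosed_DeltaStar : IsClosed DeltaStar := by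
  have : DeltaStar = ⋂ A : Set ℕ, {p | A ∈ p → 0 < bannachDensity A} := by
    ext; simp [DeltaStar]
  rw [this]
  refine isClosed_iInter fun A => ?_
  by_cases hA : 0 < bannachDensity A
  · simp [hA]
  · simpa [hA, Ultrafilter.compl_mem_iff_notMem] using ultrafilter_isClosed_basic Aᶜ

theorem add_mem_DeltaStar_left {p : Ultrafilter ℕ} (hp : p ∈ DeltaStar) (q : Ultrafilter ℕ) :
    q + p ∈ DeltaStar := by
  intro A hA
  obtain ⟨a, ha⟩ := (Ultrafilter.eventually_add q p (· ∈ A)).1 hA |>.exists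
  exact (hp _ ha).trans_le (bannachDensity_preimage_add_le A a)

theorem add_mem_DeltaStar_right {p : Ultrafilter ℕ} (hp : p ∈ DeltaStar) (q : Ultrafilter ℕ) :
    p + q ∈ DeltaStar := by
  intro A hA
  refine (hp _ ((Ultrafilter.eventually_add p q (· ∈ A)).1 hA)).trans_le
    (bannachDensity_le_of_forall_finset_exists_add_mem fun F hF => ?_)
  have hF : (⋂ x ∈ F, (x + ·) ⁻¹' A) ∈ q :=
    (Filter.biInter_finset_mem F).2 fun x hx => hF hx
  obtain ⟨b, hb⟩ := Filter.nonempty_of_mem hF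
  exact ⟨b, fun x hx => Set.mem_iInter₂.1 hb x hx⟩

theorem isAddIdeal_DeltaStar : IsAddIdeal DeltaStar :=
  ⟨DeltaStar_nonempty, fun _ hp q =>
    ⟨add_mem_DeltaStar_left hp q, add_mem_DeltaStar_right hp q⟩⟩

/-- `Δ*` is a closed two-sided ideal of `(βℕ,+)`; consequently `cl K(βℕ) ⊆ Δ*`,
where `K(βℕ)` is the smallest two-sided ideal (the intersection of all ideals). -/
theorem deltaStar_closed_ideal :
    IsClosed DeltaStar ∧ IsAddIdeal DeltaStar ∧
      closure {p : Ultrafilter ℕ | ∀ I : Set (Ultrafilter ℕ), IsAddIdeal I → p ∈ I} ⊆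
        DeltaStar :=
  ⟨isClosed_DeltaStar, isAddIdeal_DeltaStar,
    closure_minimal (fun _ hp => hp DeltaStar isAddIdeal_DeltaStar) isClosed_DeltaStar⟩
end
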